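/- arXiv:1203.2573 — 7 statements merged into one kernel-verified Lean document; each statement's English description precedes it below -/
import Mathlib

section
/- Let c, n₁, m, r be positive integers with n₁ dividing c, and let n₂ be any integer. Then | Σ_{d mod c, gcd(d,c)=1} e(dr/c) · S(md, n₂, c/n₁) | ≤ τ(c) · c · gcd(c, m). -/
/-- `e(x) = e^{2πix}`. -/
noncomputable def eAdd (x : ℝ) : ℂ := Complex.exp (2 * Real.pi * Complex.I * x)

/-- The Kloosterman sum `S(a,b,q) = ∑_{x mod q, (x,q)=1} e((a x + b x̄)/q)`,
where `x̄` is the multiplicative inverse of `x` modulo `q`. -/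
noncomputable def kloosterman (a b : ℤ) (q : ℕ) : ℂ :=
  ∑ x ∈ Finset.range q, if Nat.Coprime x q then
    eAdd ((((a * (x : ℤ) + b * ((((x : ZMod q)⁻¹).val : ℕ) : ℤ) : ℤ)) : ℝ) / (q : ℝ))
  else 0

open Finset ArithmeticFunction
open scoped ArithmeticFunction.Moebius ArithmeticFunction.zeta

lemma eAdd_add (x y : ℝ) : eAdd (x + y) = eAdd x * eAdd y := by
  simp [eAdd, mul_add, Complex.exp_add]

lemma abs_eAdd (x : ℝ) : ‖eAdd x‖ = 1 := by
  simp [eAdd, Complex.norm_exp]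

lemma eAdd_int (n : ℤ) : eAdd (n : ℝ) = 1 := by
  have : ((2 : ℂ) * Real.pi * Complex.I * ((n : ℝ) : ℂ)) = (n : ℤ) * (2 * Real.pi * Complex.I) := by
    push_cast; ring
  rw [eAdd, this, Complex.exp_int_mul_two_pi_mul_I]

lemma eAdd_pow (x : ℝ) (j : ℕ) : eAdd x ^ j = eAdd (j * x) := by
  rw [eAdd, eAdd, ← Complex.exp_nat_mul]
  congr 1
  push_cast; ring

lemma sum_eAdd_geom (N : ℕ) (hN : 0 < N) (k : ℤ) :
    ∑ j ∈ range N, eAdd ((j : ℝ) * ((k : ℝ) / N)) = if (N : ℤ) ∣ k then (N : ℂ) else 0 := by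
  have hsum : ∑ j ∈ range N, eAdd ((j : ℝ) * ((k : ℝ) / N)) = ∑ j ∈ range N, eAdd ((k:ℝ)/N) ^ j := by
    refine Finset.sum_congr rfl fun j _ => ?_
    rw [eAdd_pow]
  have hzN : eAdd ((k:ℝ)/N) ^ N = 1 := by
    rw [eAdd_pow]
    have : (N : ℝ) * ((k:ℝ)/N) = ((k : ℤ) : ℝ) := by
      field_simp
    rw [this, eAdd_int]
  rw [hsum]
  split_ifs with h
  · obtain ⟨t, rfl⟩ := h
    have : ((N * t : ℤ) : ℝ)/N = ((t:ℤ):ℝ) := by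
      push_cast
      field_simp
    rw [this, eAdd_int]
    simp
  · have hz1 : eAdd ((k:ℝ)/N) ≠ 1 := by
      intro hz
      apply h
      rw [eAdd, Complex.exp_eq_one_iff] at hz
      obtain ⟨n, hn⟩ := hz
      have hπ : (2 : ℂ) * Real.pi * Complex.I ≠ 0 := by
        simp [Real.pi_ne_zero, Complex.I_ne_zero]
      have : (((k:ℝ)/N : ℝ) : ℂ) = (n : ℂ) := by
        have hn' : (2:ℂ) * Real.pi * Complex.I * (((k:ℝ)/N : ℝ) : ℂ) = 2 * Real.pi * Complex.I * (n:ℂ) := by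
          rw [hn]; ring
        exact mul_left_cancel₀ hπ hn'
      have hk : (k : ℝ) / N = (n : ℝ) := by exact_mod_cast this
      have : (k : ℝ) = (N : ℝ) * n := by
        field_simp at hk
        linarith [hk]
      refine ⟨n, by exact_mod_cast this⟩
    rw [geom_sum_eq hz1, hzN]
    simp


lemma moebius_divisor_sum (n : ℕ) : ∑ δ ∈ n.divisors, (μ δ : ℤ) = if n = 1 then 1 else 0 := by
  have h : (μ * ζ : ArithmeticFunction ℤ) n = (1 : ArithmeticFunction ℤ) n := by
    rw [moebius_mul_coe_zeta]
  rwa [coe_mul_zeta_apply, one_apply] at h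

lemma gcd_divisors_eq_filter (d c : ℕ) (hc : 0 < c) :
    (Nat.gcd d c).divisors = c.divisors.filter (· ∣ d) := by
  ext δ
  simp only [Nat.mem_divisors, Finset.mem_filter]
  constructor
  · rintro ⟨hδ, -⟩
    exact ⟨⟨hδ.trans (Nat.gcd_dvd_right d c), hc.ne'⟩, hδ.trans (Nat.gcd_dvd_left d c)⟩
  · rintro ⟨⟨hδc, -⟩, hδd⟩
    exact ⟨Nat.dvd_gcd hδd hδc, (Nat.gcd_pos_of_pos_right d hc).ne'⟩

/-- reindex sum over multiples of δ in range c -/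
lemma sum_multiples_reindex {M : Type*} [AddCommMonoid M] (c δ : ℕ) (hδ : δ ∣ c) (hδ0 : 0 < δ)
    (f : ℕ → M) :
    ∑ d ∈ (Finset.range c).filter (δ ∣ ·), f d = ∑ j ∈ Finset.range (c / δ), f (δ * j) := by
  refine Finset.sum_nbij' (fun d => d / δ) (fun j => δ * j) ?_ ?_ ?_ ?_ ?_
  · intro d hd
    simp only [Finset.mem_filter, Finset.mem_range] at hd ⊢
    exact Nat.div_lt_div_of_lt_of_dvd hδ hd.1
  · intro j hj
    simp only [Finset.mem_filter, Finset.mem_range] at hj ⊢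
    refine ⟨?_, ⟨j, rfl⟩⟩
    calc δ * j < δ * (c / δ) := (Nat.mul_lt_mul_left hδ0).mpr hj
      _ = c := Nat.mul_div_cancel' hδ
  · intro d hd
    simp only [Finset.mem_filter] at hd
    exact Nat.mul_div_cancel' hd.2
  · intro j hj
    exact Nat.mul_div_cancel_left j hδ0
  · intro d hd
    simp only [Finset.mem_filter] at hd
    rw [Nat.mul_div_cancel' hd.2]

/-- The Ramanujan-sum bound -/
lemma ramanujan_bound (c : ℕ) (hc : 0 < c) (k : ℕ) :
    ‖∑ d ∈ Finset.range c, if Nat.Coprime d c then eAdd ((d : ℝ) * ((k : ℝ) / c)) else 0‖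
      ≤ ∑ e ∈ c.divisors, if e ∣ k then (e : ℝ) else 0 := by
  have key : (∑ d ∈ Finset.range c, if Nat.Coprime d c then eAdd ((d : ℝ) * ((k : ℝ) / c)) else 0)
      = ∑ δ ∈ c.divisors, (μ δ : ℂ) * (if ((c / δ : ℕ) : ℤ) ∣ (k : ℤ) then ((c / δ : ℕ) : ℂ) else 0) := by
    have step1 : ∀ d ∈ Finset.range c,
        (if Nat.Coprime d c then eAdd ((d : ℝ) * ((k : ℝ) / c)) else 0)
        = ∑ δ ∈ c.divisors, (if δ ∣ d then (μ δ : ℂ) * eAdd ((d : ℝ) * ((k : ℝ) / c)) else 0) := by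
      intro d _
      rw [← Finset.sum_filter, ← gcd_divisors_eq_filter d c hc, ← Finset.sum_mul]
      have h2 : (∑ δ ∈ (Nat.gcd d c).divisors, (μ δ : ℂ)) = if Nat.Coprime d c then 1 else 0 := by
        have h1 := moebius_divisor_sum (Nat.gcd d c)
        have h2 : ((∑ δ ∈ (Nat.gcd d c).divisors, (μ δ : ℤ) : ℤ) : ℂ)
            = ((if Nat.gcd d c = 1 then (1:ℤ) else 0 : ℤ) : ℂ) := congrArg _ h1
        push_cast at h2
        rw [h2]
      rw [h2]
      split_ifs <;> simp
    rw [Finset.sum_congr rfl step1, Finset.sum_comm]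
    refine Finset.sum_congr rfl fun δ hδ => ?_
    simp only [Nat.mem_divisors] at hδ
    obtain ⟨hδc, -⟩ := hδ
    have hδ0 : 0 < δ := Nat.pos_of_dvd_of_pos hδc hc
    rw [← Finset.sum_filter, ← Finset.mul_sum]
    congr 1
    rw [sum_multiples_reindex c δ hδc hδ0]
    have hq0 : 0 < c / δ := Nat.div_pos (Nat.le_of_dvd hc hδc) hδ0
    have hrw : ∀ j : ℕ, ((δ * j : ℕ) : ℝ) * ((k : ℝ) / c) = (j : ℝ) * (((k : ℤ) : ℝ) / ((c / δ : ℕ) : ℝ)) := by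
      intro j
      have hcd : (c : ℝ) = (δ : ℝ) * ((c / δ : ℕ) : ℝ) := by
        exact_mod_cast (Nat.mul_div_cancel' hδc).symm
      have hq0' : ((c / δ : ℕ) : ℝ) ≠ 0 := by positivity
      have hδ0' : (δ : ℝ) ≠ 0 := by positivity
      rw [hcd]
      push_cast
      field_simp
    rw [Finset.sum_congr rfl fun j _ => by rw [hrw j]]
    exact sum_eAdd_geom (c / δ) hq0 k
  rw [key]
  refine le_trans (norm_sum_le _ _) ?_
  have hterm : ∀ δ ∈ c.divisors,
      ‖(μ δ : ℂ) * (if ((c / δ : ℕ) : ℤ) ∣ (k : ℤ) then ((c / δ : ℕ) : ℂ) else 0)‖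
      ≤ (if (c / δ) ∣ k then ((c / δ : ℕ) : ℝ) else 0) := by
    intro δ hδ
    rw [norm_mul]
    have hμ : ‖(μ δ : ℂ)‖ ≤ 1 := by
      rw [Complex.norm_intCast]
      exact_mod_cast abs_moebius_le_one
    have hdvd : ((c / δ : ℕ) : ℤ) ∣ (k : ℤ) ↔ (c / δ) ∣ k := Int.natCast_dvd_natCast
    by_cases h : (c / δ) ∣ k
    · rw [if_pos (hdvd.mpr h), if_pos h, Complex.norm_natCast]
      calc ‖(μ δ : ℂ)‖ * ((c/δ : ℕ) : ℝ) ≤ 1 * ((c/δ : ℕ) : ℝ) := by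
            apply mul_le_mul_of_nonneg_right hμ (by positivity)
        _ = ((c/δ : ℕ) : ℝ) := one_mul _
    · rw [if_neg (fun hh => h (hdvd.mp hh)), if_neg h]
      simp
  refine le_trans (Finset.sum_le_sum hterm) ?_
  rw [Nat.sum_div_divisors c (fun e => if e ∣ k then (e : ℝ) else 0)]

lemma div_dvd_div_of_dvd_of_dvd {a b e : ℕ} (hab : a ∣ b) (hbe : b ∣ e) : e / b ∣ e / a := by
  obtain ⟨u, rfl⟩ := hab
  obtain ⟨t, rfl⟩ := hbe
  rcases Nat.eq_zero_or_pos a with rfl | ha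
  · simp
  rcases Nat.eq_zero_or_pos u with rfl | hu
  · simp
  rw [Nat.mul_div_cancel_left _ (Nat.mul_pos ha hu)]
  rw [show a * u * t = a * (u * t) by ring, Nat.mul_div_cancel_left _ ha]
  exact Dvd.intro_left u rfl

lemma div_gcd_dvd_q (e n₁ q m : ℕ) (hq : 0 < q) (he : 0 < e) (hn₁ : 0 < n₁)
    (hec : e ∣ n₁ * q) : (e / Nat.gcd e (m * n₁)) ∣ q := by
  have hg1 : Nat.gcd e n₁ ∣ Nat.gcd e (m * n₁) :=
    Nat.dvd_gcd (Nat.gcd_dvd_left _ _) ((Nat.gcd_dvd_right e n₁).trans (dvd_mul_left n₁ m))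
  have h1 : e / Nat.gcd e (m * n₁) ∣ e / Nat.gcd e n₁ :=
    div_dvd_div_of_dvd_of_dvd hg1 (Nat.gcd_dvd_left _ _)
  refine h1.trans ?_
  set g1 := Nat.gcd e n₁ with hg1def
  have hg10 : 0 < g1 := Nat.gcd_pos_of_pos_left n₁ he
  have hcop : Nat.Coprime (e / g1) (n₁ / g1) := Nat.coprime_div_gcd_div_gcd hg10
  have hd : (e / g1) ∣ (n₁ / g1) * q := by
    obtain ⟨w, hw⟩ := hec
    refine ⟨w, ?_⟩
    have hkey : g1 * ((n₁ / g1) * q) = g1 * (e / g1 * w) := by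
      rw [show g1 * ((n₁ / g1) * q) = (g1 * (n₁ / g1)) * q by ring,
        Nat.mul_div_cancel' (Nat.gcd_dvd_right e n₁),
        show g1 * (e / g1 * w) = (g1 * (e / g1)) * w by ring,
        Nat.mul_div_cancel' (Nat.gcd_dvd_left e n₁), hw]
    exact Nat.eq_of_mul_eq_mul_left hg10 hkey
  exact hcop.dvd_of_dvd_mul_left hd

lemma gcd_dvd_mul_gcd (c n₁ m e : ℕ) (hc : 0 < c) (hn₁ : 0 < n₁) (hec : e ∣ c) :
    Nat.gcd e (m * n₁) ∣ n₁ * Nat.gcd c m := by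
  have h1 : Nat.gcd e (m * n₁) ∣ Nat.gcd c (m * n₁) :=
    Nat.gcd_dvd_gcd_of_dvd_left (m * n₁) hec
  refine h1.trans ?_
  set G := Nat.gcd c (m * n₁) with hG
  set h := Nat.gcd G n₁ with hh
  have hh0 : 0 < h := Nat.gcd_pos_of_pos_right G hn₁
  have hhG : h ∣ G := Nat.gcd_dvd_left G n₁
  have hu : G / h ∣ m := by
    have hcop : Nat.Coprime (G / h) (n₁ / h) := Nat.coprime_div_gcd_div_gcd hh0
    have hd : (G / h) ∣ m * (n₁ / h) := by
      obtain ⟨w, hw⟩ : G ∣ m * n₁ := Nat.gcd_dvd_right c (m * n₁)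
      refine ⟨w, Nat.eq_of_mul_eq_mul_left hh0 ?_⟩
      rw [show h * (m * (n₁ / h)) = m * (h * (n₁ / h)) by ring,
        Nat.mul_div_cancel' (Nat.gcd_dvd_right G n₁),
        show h * (G / h * w) = (h * (G / h)) * w by ring,
        Nat.mul_div_cancel' hhG, ← hw]
    exact hcop.dvd_of_dvd_mul_right hd
  have huc : G / h ∣ c := (Nat.div_dvd_of_dvd hhG).trans (Nat.gcd_dvd_left c (m * n₁))
  have hfin : G = h * (G / h) := (Nat.mul_div_cancel' hhG).symm
  rw [hfin]
  exact mul_dvd_mul (Nat.gcd_dvd_right G n₁) (Nat.dvd_gcd huc hu)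

lemma count_bound (q e a b : ℕ) (hq : 0 < q) (he : 0 < e)
    (ht : (e / Nat.gcd e b) ∣ q) :
    ∑ x ∈ Finset.range q, (if e ∣ a + b * x then (e : ℝ) else 0)
      ≤ ((q * Nat.gcd e b : ℕ) : ℝ) := by
  set g := Nat.gcd e b with hg
  have hg0 : 0 < g := Nat.gcd_pos_of_pos_left b he
  set t := e / g with htdef
  have hge : g ∣ e := Nat.gcd_dvd_left e b
  have hgb : g ∣ b := Nat.gcd_dvd_right e b
  have het : e = g * t := (Nat.mul_div_cancel' hge).symm
  have ht0 : 0 < t := Nat.div_pos (Nat.le_of_dvd he hge) hg0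
  have key : ∀ u v : ℕ, u ≤ v → e ∣ a + b * u → e ∣ a + b * v → u % t = v % t := by
    intro u v huv h1 h2
    obtain ⟨w, rfl⟩ := Nat.le.dest huv
    have h3 : e ∣ b * w := by
      have h4 := Nat.dvd_sub h2 h1
      have h5 : a + b * (u + w) - (a + b * u) = b * w := by
        have : a + b * (u + w) = (a + b * u) + b * w := by ring
        omega
      rwa [h5] at h4
    have h6 : t ∣ w := by
      have hcop : Nat.Coprime t (b / g) := Nat.coprime_div_gcd_div_gcd hg0
      have h7 : g * t ∣ g * ((b / g) * w) := by
        rw [show g * ((b / g) * w) = (g * (b / g)) * w by ring,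
          Nat.mul_div_cancel' hgb, ← het]
        exact h3
      exact hcop.dvd_of_dvd_mul_left ((mul_dvd_mul_iff_left hg0.ne').mp h7)
    have := (Nat.modEq_iff_dvd' (Nat.le_add_right u w)).mpr (by simpa using h6)
    exact this
  set T := (Finset.range q).filter (fun x => e ∣ a + b * x) with hT
  have hcard : T.card ≤ q / t := by
    have h := Finset.card_range (q / t)
    rw [← h]
    apply Finset.card_le_card_of_injOn (fun x => x / t)
    · intro x hx
      simp only [hT, Finset.mem_coe, Finset.mem_filter, Finset.mem_range] at hx
      exact Finset.mem_range.mpr (Nat.div_lt_div_of_lt_of_dvd ht hx.1)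
    · intro x hx y hy hxy
      have hxy' : x / t = y / t := hxy
      simp only [hT, Finset.mem_coe, Finset.mem_filter, Finset.mem_range] at hx hy
      have hmod : x % t = y % t := by
        rcases le_total x y with h | h
        · exact key x y h hx.2 hy.2
        · exact (key y x h hy.2 hx.2).symm
      calc x = t * (x / t) + x % t := (Nat.div_add_mod x t).symm
        _ = t * (y / t) + y % t := by rw [hxy', hmod]
        _ = y := Nat.div_add_mod y t
  have hsum : ∑ x ∈ Finset.range q, (if e ∣ a + b * x then (e : ℝ) else 0)
      = (T.card : ℝ) * (e : ℝ) := by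
    rw [← Finset.sum_filter, ← hT, Finset.sum_const, nsmul_eq_mul]
  rw [hsum]
  have hqt : (q / t) * e = q * g := by
    rw [het, show (q / t) * (g * t) = g * ((q / t) * t) by ring, Nat.div_mul_cancel ht]
    ring
  calc (T.card : ℝ) * e ≤ ((q / t : ℕ) : ℝ) * e := by
        apply mul_le_mul_of_nonneg_right (by exact_mod_cast hcard) (by positivity)
    _ = ((q * g : ℕ) : ℝ) := by rw [← hqt]; push_cast; ring


/-- Lemma `lem33`: the complete exponential sum of Kloosterman sums is bounded by
`τ(c) · c · (c, m)`. -/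
theorem kloosterman_sum_bound (c n₁ m r : ℕ) (hc : 0 < c) (hn₁ : 0 < n₁)
    (hm : 0 < m) (hr : 0 < r) (hdvd : n₁ ∣ c) (n₂ : ℤ) :
    ‖∑ d ∈ Finset.range c, if Nat.Coprime d c then
        eAdd (((d * r : ℕ) : ℝ) / (c : ℝ)) * kloosterman ((m : ℤ) * d) n₂ (c / n₁)
      else 0‖ ≤
      (c.divisors.card : ℝ) * (c : ℝ) * (Nat.gcd c m : ℝ) := by
  set q := c / n₁ with hqdef
  have hq : n₁ * q = c := Nat.mul_div_cancel' hdvd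
  have hq0 : 0 < q := Nat.div_pos (Nat.le_of_dvd hc hdvd) hn₁
  have hc0 : (c : ℝ) ≠ 0 := by positivity
  have hq0' : (q : ℝ) ≠ 0 := by positivity
  -- notation
  set B : ℕ → ℂ := fun x => eAdd (((n₂ * ((((x : ZMod q)⁻¹).val : ℕ) : ℤ) : ℤ) : ℝ) / (q : ℝ)) with hB
  set f : ℕ → ℕ → ℂ := fun d x => if Nat.Coprime x q then
      (if Nat.Coprime d c then eAdd ((d : ℝ) * (((r + m * n₁ * x : ℕ) : ℝ) / (c : ℝ))) else 0) * B x
    else 0 with hf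
  have step1 : ∀ d ∈ Finset.range c,
      (if Nat.Coprime d c then
        eAdd (((d * r : ℕ) : ℝ) / (c : ℝ)) * kloosterman ((m : ℤ) * d) n₂ q else 0)
      = ∑ x ∈ Finset.range q, f d x := by
    intro d _
    by_cases hd : Nat.Coprime d c
    · rw [if_pos hd, kloosterman, Finset.mul_sum]
      refine Finset.sum_congr rfl fun x _ => ?_
      by_cases hx : Nat.Coprime x q
      · rw [if_pos hx, hf]
        simp only [if_pos hx, if_pos hd]
        rw [← eAdd_add, ← eAdd_add]
        congr 1
        have hcast : (c : ℝ) = (n₁ : ℝ) * (q : ℝ) := by exact_mod_cast hq.symm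
        rw [hcast]
        push_cast
        field_simp
        ring
      · rw [if_neg hx, hf]
        simp only [if_neg hx, mul_zero]
    · rw [if_neg hd, hf]
      simp only [if_neg hd, zero_mul]
      simp
  rw [Finset.sum_congr rfl step1, Finset.sum_comm]
  have step2 : ∀ x ∈ Finset.range q,
      ‖∑ d ∈ Finset.range c, f d x‖
      ≤ ∑ e ∈ c.divisors, (if e ∣ (r + m * n₁ * x) then (e : ℝ) else 0) := by
    intro x _
    have hnonneg : (0:ℝ) ≤ ∑ e ∈ c.divisors, (if e ∣ (r + m * n₁ * x) then (e : ℝ) else 0) :=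
      Finset.sum_nonneg fun e _ => by split_ifs <;> positivity
    by_cases hx : Nat.Coprime x q
    · have : ∑ d ∈ Finset.range c, f d x
          = (∑ d ∈ Finset.range c, (if Nat.Coprime d c then
              eAdd ((d : ℝ) * (((r + m * n₁ * x : ℕ) : ℝ) / (c : ℝ))) else 0)) * B x := by
        rw [Finset.sum_mul]
        refine Finset.sum_congr rfl fun d _ => ?_
        rw [hf]
        simp only [if_pos hx]
      rw [this, norm_mul]
      have hBabs : ‖B x‖ = 1 := abs_eAdd _
      rw [hBabs, mul_one]
      exact ramanujan_bound c hc (r + m * n₁ * x)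
    · have : ∑ d ∈ Finset.range c, f d x = 0 := by
        refine Finset.sum_eq_zero fun d _ => ?_
        rw [hf]
        simp only [if_neg hx]
      rw [this, norm_zero]
      exact hnonneg
  refine le_trans (le_trans (norm_sum_le _ _) (Finset.sum_le_sum step2)) ?_
  rw [Finset.sum_comm]
  have step3 : ∀ e ∈ c.divisors,
      (∑ x ∈ Finset.range q, if e ∣ (r + m * n₁ * x) then (e : ℝ) else 0)
      ≤ ((q * (n₁ * Nat.gcd c m) : ℕ) : ℝ) := by
    intro e he
    rw [Nat.mem_divisors] at he
    have he0 : 0 < e := Nat.pos_of_dvd_of_pos he.1 hc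
    have hec : e ∣ n₁ * q := by rw [hq]; exact he.1
    have ht : (e / Nat.gcd e (m * n₁)) ∣ q := div_gcd_dvd_q e n₁ q m hq0 he0 hn₁ hec
    refine le_trans (count_bound q e r (m * n₁) hq0 he0 ht) ?_
    have hgd : Nat.gcd e (m * n₁) ∣ n₁ * Nat.gcd c m := gcd_dvd_mul_gcd c n₁ m e hc hn₁ he.1
    have hpos : 0 < n₁ * Nat.gcd c m := Nat.mul_pos hn₁ (Nat.gcd_pos_of_pos_left m hc)
    have : Nat.gcd e (m * n₁) ≤ n₁ * Nat.gcd c m := Nat.le_of_dvd hpos hgd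
    exact_mod_cast Nat.mul_le_mul_left q this
  refine le_trans (Finset.sum_le_sum step3) ?_
  rw [Finset.sum_const, nsmul_eq_mul]
  have : q * (n₁ * Nat.gcd c m) = c * Nat.gcd c m := by
    rw [← hq]; ring
  rw [this]
  push_cast
  ring_nf
  exact le_refl _
end

section
/- Let c, n₁, m, r be positive integers with n₁ dividing c, and let n₂ be any integer. Then Σ_{d mod c, gcd(d,c)=1} e(dr/c) · S(md, n₂, c/n₁) = Σ_{h mod c/n₁, gcd(h, c/n₁)=1} e(n₂ h̄ / (c/n₁)) · r_c(r + m h n₁), where h̄ is the multiplicative inverse of h modulo c/n₁ and r_c(x) := Σ_{d mod c, gcd(d,c)=1} e(dx/c) is the Ramanujan sum. -/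
/-- The Ramanujan sum `r_c(x) = ∑_{d mod c, (d,c)=1} e(dx/c)`. -/
noncomputable def ramanujanSum (c : ℕ) (x : ℤ) : ℂ :=
  ∑ d ∈ Finset.range c, if Nat.Coprime d c then
    eAdd ((((d : ℤ) * x : ℤ) : ℝ) / (c : ℝ))
  else 0

/-- The opening identity in the proof of Lemma `lem33`: the complete exponential sum of
Kloosterman sums equals a sum of Ramanujan sums. -/
theorem kloosterman_sum_ramanujan (c n₁ m r : ℕ) (hc : 0 < c) (hn₁ : 0 < n₁)
    (hm : 0 < m) (hr : 0 < r) (hdvd : n₁ ∣ c) (n₂ : ℤ) :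
    (∑ d ∈ Finset.range c, if Nat.Coprime d c then
        eAdd (((d * r : ℕ) : ℝ) / (c : ℝ)) * kloosterman ((m : ℤ) * d) n₂ (c / n₁)
      else 0) =
      ∑ h ∈ Finset.range (c / n₁), if Nat.Coprime h (c / n₁) then
        eAdd (((n₂ * ((((h : ZMod (c / n₁))⁻¹).val : ℕ) : ℤ) : ℤ) : ℝ) / ((c / n₁ : ℕ) : ℝ)) *
          ramanujanSum c ((r : ℤ) + (m : ℤ) * h * n₁)
      else 0 := by
  obtain ⟨q, rfl⟩ := hdvd
  have hq : 0 < q := Nat.pos_of_mul_pos_left (by rwa [mul_comm] at hc)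
  rw [Nat.mul_div_cancel_left q hn₁]
  simp only [kloosterman, ramanujanSum, Finset.mul_sum, ← Finset.sum_filter]
  rw [Finset.sum_comm]
  refine Finset.sum_congr rfl fun x hx => Finset.sum_congr rfl fun d hd => ?_
  simp only [eAdd, ← Complex.exp_add]
  congr 1
  have hq0 : (q : ℂ) ≠ 0 := Nat.cast_ne_zero.2 hq.ne'
  have hn0 : (n₁ : ℂ) ≠ 0 := Nat.cast_ne_zero.2 hn₁.ne'
  push_cast
  field_simp
  ring
end

section
/- For every integer n ≥ 1 there exist complex constants c_{ν,μ,γ₂,...,γ_ν} (depending only on n and the indices) with the following property: for every smooth h : ℝ → ℝ with h'(t) ≠ 0 for all t, and every smooth compactly supported f : ℝ → ℂ, the n-fold iterate of the operator D(g) := −(d/dt)( g / (i h') ) satisfies, for all t ∈ ℝ, D^n(f)(t) = Σ_{ν=n}^{2n} Σ_{μ=0}^{ν} ( f^{(μ)}(t) / h'(t)^{ν} ) · Σ_{(γ₂,...,γ_ν): 2γ₂ + 3γ₃ + ⋯ + νγ_ν = ν − μ} c_{ν,μ,γ₂,...,γ_ν} · h''(t)^{γ₂} · h'''(t)^{γ₃}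 ⋯ h^{(ν)}(t)^{γ_ν}. -/
/-- The integration-by-parts operator `D(g)(t) = -(d/dt)(g(t)/(i h'(t)))`. -/
noncomputable def Dop (h : ℝ → ℝ) (g : ℝ → ℂ) : ℝ → ℂ :=
  fun t => -deriv (fun u => g u / (Complex.I * ((deriv h u : ℝ) : ℂ))) t

open Complex List

namespace DopAux

abbrev Term := ℕ × ℕ × List ℕ × ℂ   -- (μ, ν, l, a)

noncomputable def Hc (h : ℝ → ℝ) (j : ℕ) (u : ℝ) : ℂ := ((iteratedDeriv j h u : ℝ) : ℂ)

noncomputable def Pc (h : ℝ → ℝ) (l : List ℕ) (u : ℝ) : ℂ := (l.map (fun j => Hc h j u)).prod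

noncomputable def teval (h : ℝ → ℝ) (f : ℝ → ℂ) (T : Term) (t : ℝ) : ℂ :=
  T.2.2.2 * iteratedDeriv T.1 f t * Pc h T.2.2.1 t / ((deriv h t : ℝ) : ℂ) ^ T.2.1

def bump : List ℕ → List (List ℕ)
  | [] => []
  | j :: l => ((j+1) :: l) :: (bump l).map (j :: ·)

noncomputable def step : Term → List Term
  | (μ, ν, l, a) =>
    (μ + 1, ν + 1, l, Complex.I * a) ::
    ((bump l).map (fun l' => (μ, ν + 1, l', Complex.I * a))) ++
    [(μ, ν + 2, 2 :: l, -((ν + 1 : ℕ) : ℂ) * Complex.I * a)]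

noncomputable def stepsN : ℕ → List Term
  | 0 => [(0, 0, [], 1)]
  | n+1 => (stepsN n).flatMap step

section analysis

variable {h : ℝ → ℝ} {f : ℝ → ℂ} (hh : ContDiff ℝ (⊤ : ℕ∞) h) (hf : ContDiff ℝ (⊤ : ℕ∞) f)
  (hne : ∀ t : ℝ, deriv h t ≠ 0)

lemma deriv_eq_H (u : ℝ) : ((deriv h u : ℝ) : ℂ) = Hc h 1 u := by
  rw [Hc, iteratedDeriv_one]

include hne in
lemma Hc_one_ne (u : ℝ) : Hc h 1 u ≠ 0 := by
  rw [← deriv_eq_H]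
  simpa using hne u

include hh in
lemma hasDerivAt_H (j : ℕ) (t : ℝ) :
    HasDerivAt (fun u => Hc h j u) (Hc h (j+1) t) t := by
  have : HasDerivAt (iteratedDeriv j h) (iteratedDeriv (j+1) h t) t := by
    rw [iteratedDeriv_succ]
    exact ((hh.differentiable_iteratedDeriv j (by exact_mod_cast ENat.natCast_lt_top j)).differentiableAt).hasDerivAt
  exact this.ofReal_comp

include hf in
lemma hasDerivAt_F (μ : ℕ) (t : ℝ) :
    HasDerivAt (iteratedDeriv μ f) (iteratedDeriv (μ+1) f t) t := by
  rw [iteratedDeriv_succ]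
  exact ((hf.differentiable_iteratedDeriv μ (by exact_mod_cast ENat.natCast_lt_top μ)).differentiableAt).hasDerivAt

include hh in
lemma hasDerivAt_P (l : List ℕ) (t : ℝ) :
    HasDerivAt (fun u => Pc h l u)
      (((bump l).map (fun l' => Pc h l' t)).sum) t := by
  induction l with
  | nil => simpa [bump, Pc] using (hasDerivAt_const t (1:ℂ))
  | cons j l ih =>
    have key := (hasDerivAt_H hh j t).mul ih
    simp only [Pc, List.map_cons, List.prod_cons, bump, List.map_map, List.sum_cons] at key ⊢
    refine key.congr_deriv ?_
    symm
    rw [← List.sum_map_mul_left]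
    congr 1

include hh hf hne in
lemma hasDerivAt_teval (T : Term) (t : ℝ) :
    HasDerivAt (fun u => teval h f T u / (Complex.I * ((deriv h u : ℝ) : ℂ)))
      (-(((step T).map (fun T' => teval h f T' t)).sum)) t := by
  obtain ⟨μ, ν, l, a⟩ := T
  have hfun : (fun u => teval h f (μ, ν, l, a) u / (Complex.I * ((deriv h u : ℝ) : ℂ)))
      = fun u => (a * Complex.I⁻¹) * (iteratedDeriv μ f u * Pc h l u / (Hc h 1 u) ^ (ν + 1)) := by
    funext u
    simp only [teval, deriv_eq_H]
    have := Hc_one_ne hne u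
    rw [Complex.inv_I]
    field_simp
    linear_combination (a * iteratedDeriv μ f u * Pc h l u * Hc h 1 u ^ (ν + 1)) * Complex.I_sq
  rw [hfun]
  have hQ := (((hasDerivAt_F hf μ t).mul (hasDerivAt_P hh l t)).div
      ((hasDerivAt_pow (ν + 1) (Hc h 1 t)).comp t (hasDerivAt_H hh 1 t)) (pow_ne_zero _ (Hc_one_ne hne t))).const_mul
      (a * Complex.I⁻¹)
  refine hQ.congr_deriv ?_
  symm
  simp only [step, List.map_cons, List.sum_cons, List.map_append, List.sum_append,
    List.map_map, List.sum_singleton]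
  have hmapeq : ((bump l).map ((fun T' => teval h f T' t) ∘ (fun l' => (μ, ν + 1, l', Complex.I * a)))).sum
      = (Complex.I * a * iteratedDeriv μ f t / (Hc h 1 t) ^ (ν + 1)) *
          ((bump l).map (fun l' => Pc h l' t)).sum := by
    rw [← List.sum_map_mul_left]
    congr 1
    refine List.map_congr_left fun l' _ => ?_
    simp only [Function.comp_def, teval, deriv_eq_H]
    have := Hc_one_ne hne t
    field_simp
    try ring
  rw [hmapeq]
  simp only [teval, deriv_eq_H, Pc, List.map_cons, List.prod_cons]
  have hd := Hc_one_ne hne t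
  have hI := Complex.I_ne_zero
  rw [Complex.inv_I]
  simp only [Function.comp_apply, Pi.mul_apply, List.map_nil, List.sum_nil, add_zero, Nat.add_sub_cancel]
  field_simp
  ring

include hh hf hne in
lemma hasDerivAt_sum (L : List Term) (t : ℝ) :
    HasDerivAt (fun u => ((L.map (fun T => teval h f T u)).sum) / (Complex.I * ((deriv h u : ℝ) : ℂ)))
      (-(((L.flatMap step).map (fun T' => teval h f T' t)).sum)) t := by
  induction L with
  | nil =>
    simp only [List.map_nil, List.sum_nil, zero_div, List.flatMap_nil, neg_zero]
    exact hasDerivAt_const t (0:ℂ)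
  | cons T L ih =>
    have key := (hasDerivAt_teval hh hf hne T t).add ih
    have hfun : (fun u => (((T :: L).map (fun T => teval h f T u)).sum) / (Complex.I * ((deriv h u : ℝ):ℂ)))
        = fun u => teval h f T u / (Complex.I * ((deriv h u : ℝ):ℂ))
            + ((L.map (fun T => teval h f T u)).sum) / (Complex.I * ((deriv h u : ℝ):ℂ)) := by
      funext u; rw [List.map_cons, List.sum_cons, add_div]
    rw [hfun]
    refine key.congr_deriv ?_
    symm
    simp [List.flatMap_cons]
    ring

include hh hf hne in
lemma Dop_sum (L : List Term) (t : ℝ) :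
    Dop h (fun u => (L.map (fun T => teval h f T u)).sum) t
      = ((L.flatMap step).map (fun T' => teval h f T' t)).sum := by
  rw [Dop, (hasDerivAt_sum hh hf hne L t).deriv, neg_neg]

include hh hf hne in
lemma iterate_eq (n : ℕ) :
    ∀ t : ℝ, (Dop h)^[n] f t = ((stepsN n).map (fun T => teval h f T t)).sum := by
  induction n with
  | zero =>
    intro t
    simp [stepsN, teval, Pc]
  | succ n ih =>
    intro t
    rw [Function.iterate_succ_apply']
    have hfn : (Dop h)^[n] f = fun u => ((stepsN n).map (fun T => teval h f T u)).sum :=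
      funext ih
    rw [hfn, Dop_sum hh hf hne, stepsN]

end analysis

section comb

/-- The invariant: `(μ, ν, l, a)` has `l.sum + μ = ν`, `n ≤ ν ≤ 2n`, entries of `l` are `≥ 2`. -/
def Inv (n : ℕ) : Term → Prop
  | (μ, ν, l, _a) => l.sum + μ = ν ∧ n ≤ ν ∧ ν ≤ 2 * n ∧ ∀ j ∈ l, 2 ≤ j

lemma bump_sum {l : List ℕ} : ∀ l' ∈ bump l, l'.sum = l.sum + 1 := by
  induction l with
  | nil => simp [bump]
  | cons j l ih =>
    intro l' hl'
    rw [bump] at hl'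
    rcases List.mem_cons.1 hl' with rfl | hm
    · simp; omega
    · obtain ⟨l'', hl'', rfl⟩ := List.mem_map.1 hm
      have := ih l'' hl''
      simp [this]; omega

lemma bump_mem {l : List ℕ} (h2 : ∀ j ∈ l, 2 ≤ j) :
    ∀ l' ∈ bump l, ∀ j ∈ l', 2 ≤ j := by
  induction l with
  | nil => simp [bump]
  | cons j l ih =>
    intro l' hl'
    rw [bump] at hl'
    have h2l : ∀ j ∈ l, 2 ≤ j := fun j hj => h2 j (List.mem_cons_of_mem _ hj)
    have h2j : 2 ≤ j := h2 j (List.mem_cons_self)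
    rcases List.mem_cons.1 hl' with rfl | hm
    · intro i hi
      rcases List.mem_cons.1 hi with rfl | hi
      · omega
      · exact h2l i hi
    · obtain ⟨l'', hl'', rfl⟩ := List.mem_map.1 hm
      intro i hi
      rcases List.mem_cons.1 hi with rfl | hi
      · exact h2j
      · exact ih h2l l'' hl'' i hi

lemma step_inv {n : ℕ} {T : Term} (hT : Inv n T) : ∀ T' ∈ step T, Inv (n+1) T' := by
  obtain ⟨μ, ν, l, a⟩ := T
  simp only [Inv] at hT
  obtain ⟨hsum, hlo, hhi, h2⟩ := hT
  intro T' hT'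
  rw [step] at hT'
  rcases List.mem_cons.1 hT' with rfl | hm
  · simp only [Inv]
    exact ⟨by omega, by omega, by omega, h2⟩
  · rcases List.mem_append.1 hm with hm | hm
    · obtain ⟨l', hl', rfl⟩ := List.mem_map.1 hm
      have hs := bump_sum l' hl'
      simp only [Inv]
      exact ⟨by omega, by omega, by omega, bump_mem h2 l' hl'⟩
    · rcases List.mem_singleton.1 hm with rfl
      simp only [Inv, List.sum_cons]
      refine ⟨by omega, by omega, by omega, ?_⟩
      intro i hi
      rcases List.mem_cons.1 hi with rfl | hi
      · omega
      · exact h2 i hi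

lemma stepsN_inv (n : ℕ) : ∀ T ∈ stepsN n, Inv n T := by
  induction n with
  | zero =>
    intro T hT
    rw [stepsN, List.mem_singleton] at hT
    subst hT
    simp only [Inv]
    exact ⟨rfl, le_rfl, by norm_num, by simp⟩
  | succ n ih =>
    intro T hT
    rw [stepsN, List.mem_flatMap] at hT
    obtain ⟨T', hT', hmem⟩ := hT
    exact step_inv (ih T' hT') T hmem

lemma length_le_sum {l : List ℕ} (h1 : ∀ j ∈ l, 1 ≤ j) : l.length ≤ l.sum := by
  induction l with
  | nil => simp
  | cons j l ih =>
    have := h1 j (List.mem_cons_self)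
    have := ih (fun i hi => h1 i (List.mem_cons_of_mem _ hi))
    simp only [List.length_cons, List.sum_cons]
    omega

lemma sum_range_count (l : List ℕ) (m : ℕ) (hm : ∀ j ∈ l, j < m) :
    ∑ i ∈ Finset.range m, i * l.count i = l.sum := by
  induction l with
  | nil => simp
  | cons j l ih =>
    have hj : j ∈ Finset.range m := Finset.mem_range.2 (hm j (List.mem_cons_self))
    have ihl := ih (fun i hi => hm i (List.mem_cons_of_mem _ hi))
    simp only [List.count_cons, beq_iff_eq, List.sum_cons]
    have : ∀ i, i * (l.count i + if j = i then 1 else 0)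
        = i * l.count i + (if i = j then i else 0) := by
      intro i
      by_cases hij : i = j
      · subst hij; simp [Nat.mul_add]
      · simp [hij, Ne.symm hij]
    simp only [this, Finset.sum_add_distrib, ihl, Finset.sum_ite_eq' (Finset.range m), hj, if_pos]
    omega

lemma prod_range_count {M : Type*} [CommMonoid M] (g : ℕ → M) (l : List ℕ) (m : ℕ)
    (hm : ∀ j ∈ l, j < m) :
    ∏ i ∈ Finset.range m, g i ^ l.count i = (l.map g).prod := by
  induction l with
  | nil => simp
  | cons j l ih =>
    have hj : j ∈ Finset.range m := Finset.mem_range.2 (hm j (List.mem_cons_self))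
    have ihl := ih (fun i hi => hm i (List.mem_cons_of_mem _ hi))
    simp only [List.count_cons, beq_iff_eq, List.map_cons, List.prod_cons]
    have : ∀ i, g i ^ (l.count i + if j = i then 1 else 0)
        = g i ^ l.count i * (if i = j then g i else 1) := by
      intro i
      by_cases hij : i = j
      · subst hij; simp [pow_succ]
      · simp [hij, Ne.symm hij]
    simp only [this, Finset.prod_mul_distrib, ihl, Finset.prod_ite_eq' (Finset.range m), hj,
      if_pos]
    exact mul_comm _ _

noncomputable def RHS (n : ℕ) (c : (ν : ℕ) → ℕ → ((Fin (ν + 1) → Fin (ν + 1)) → ℂ))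
    (h : ℝ → ℝ) (f : ℝ → ℂ) (t : ℝ) : ℂ :=
  ∑ ν ∈ Finset.Icc n (2 * n), ∑ μ ∈ Finset.range (ν + 1),
    (iteratedDeriv μ f t / ((deriv h t : ℝ) : ℂ) ^ ν) *
      ∑ γ : Fin (ν + 1) → Fin (ν + 1),
        if (∑ i ∈ Finset.univ.filter (fun i : Fin (ν + 1) => 2 ≤ (i : ℕ)),
              (i : ℕ) * ((γ i : ℕ))) = ν - μ then
          c ν μ γ *
            ∏ i ∈ Finset.univ.filter (fun i : Fin (ν + 1) => 2 ≤ (i : ℕ)),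
              ((iteratedDeriv (i : ℕ) h t : ℝ) : ℂ) ^ ((γ i : ℕ))
        else 0

noncomputable def cSingle (T : Term) (ν : ℕ) (μ : ℕ) (γ : Fin (ν + 1) → Fin (ν + 1)) : ℂ :=
  if T.1 = μ ∧ T.2.1 = ν ∧ (∀ i : Fin (ν + 1), (γ i : ℕ) = T.2.2.1.count (i : ℕ)) then
    T.2.2.2 else 0

noncomputable def cList (L : List Term) (ν : ℕ) (μ : ℕ) (γ : Fin (ν + 1) → Fin (ν + 1)) : ℂ :=
  ((L.map (fun T => cSingle T ν μ γ)).sum)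

variable {n : ℕ} {h : ℝ → ℝ} {f : ℝ → ℂ} {t : ℝ}

lemma RHS_nil : RHS n (cList []) h f t = 0 := by
  simp [RHS, cList]

lemma RHS_add (c₁ c₂ : (ν : ℕ) → ℕ → ((Fin (ν + 1) → Fin (ν + 1)) → ℂ)) :
    RHS n (fun ν μ γ => c₁ ν μ γ + c₂ ν μ γ) h f t = RHS n c₁ h f t + RHS n c₂ h f t := by
  unfold RHS
  rw [← Finset.sum_add_distrib]
  refine Finset.sum_congr rfl fun ν _ => ?_
  rw [← Finset.sum_add_distrib]
  refine Finset.sum_congr rfl fun μ _ => ?_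
  rw [← mul_add, ← Finset.sum_add_distrib]
  congr 1
  refine Finset.sum_congr rfl fun γ _ => ?_
  split_ifs
  · ring
  · simp

lemma RHS_single {T : Term} (hT : Inv n T) :
    RHS n (cSingle T) h f t = teval h f T t := by
  obtain ⟨μ₀, ν₀, l, a⟩ := T
  simp only [Inv] at hT
  obtain ⟨hsum, hlo, hhi, h2⟩ := hT
  have hlen : l.length ≤ l.sum := length_le_sum (fun j hj => by have := h2 j hj; omega)
  have hcount_le : ∀ i : ℕ, l.count i ≤ ν₀ := fun i =>
    le_trans ((List.count_le_length (a := i) (l := l))) (by omega)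
  have hlt : ∀ j ∈ l, j < ν₀ + 1 := fun j hj => by
    have : j ≤ l.sum := List.single_le_sum (fun x _ => Nat.zero_le x) j hj
    omega
  have hc0 : l.count 0 = 0 :=
    List.count_eq_zero.2 (fun hm => by have := h2 0 hm; omega)
  have hc1 : l.count 1 = 0 :=
    List.count_eq_zero.2 (fun hm => by have := h2 1 hm; omega)
  set γ₀ : Fin (ν₀ + 1) → Fin (ν₀ + 1) :=
    fun i => ⟨l.count (i : ℕ), by have := hcount_le (i : ℕ); omega⟩ with hγ₀
  rw [RHS]
  rw [Finset.sum_eq_single_of_mem ν₀ (Finset.mem_Icc.2 ⟨hlo, hhi⟩) ?hν]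
  case hν =>
    intro ν _ hν
    apply Finset.sum_eq_zero
    intro μ _
    have hz : ∀ γ : Fin (ν + 1) → Fin (ν + 1), cSingle (μ₀, ν₀, l, a) ν μ γ = 0 := by
      intro γ
      rw [cSingle, if_neg]
      rintro ⟨-, hc, -⟩
      exact hν (by simpa using hc.symm)
    simp [hz]
  rw [Finset.sum_eq_single_of_mem μ₀ (Finset.mem_range.2 (by omega)) ?hμ]
  case hμ =>
    intro μ _ hμ
    have hz : ∀ γ : Fin (ν₀ + 1) → Fin (ν₀ + 1), cSingle (μ₀, ν₀, l, a) ν₀ μ γ = 0 := by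
      intro γ
      rw [cSingle, if_neg]
      rintro ⟨hc, -, -⟩
      exact hμ (by simpa using hc.symm)
    simp [hz]
  rw [Finset.sum_eq_single γ₀ ?hγ (by simp)]
  case hγ =>
    intro γ _ hγ
    by_cases hmatch : ∀ i : Fin (ν₀ + 1), (γ i : ℕ) = l.count (i : ℕ)
    · exact absurd (funext fun i => Fin.ext (by rw [hmatch i])) hγ
    · have hz : cSingle (μ₀, ν₀, l, a) ν₀ μ₀ γ = 0 := by
        rw [cSingle, if_neg]
        rintro ⟨-, -, hm⟩
        exact hmatch (by simpa using hm)
      simp [hz]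
  -- evaluate at γ₀
  have hval : ∀ i : Fin (ν₀ + 1), ((γ₀ i : ℕ)) = l.count (i : ℕ) := fun i => rfl
  have hcond : (∑ i ∈ Finset.univ.filter (fun i : Fin (ν₀ + 1) => 2 ≤ (i : ℕ)),
      (i : ℕ) * ((γ₀ i : ℕ))) = ν₀ - μ₀ := by
    have e1 : (∑ i ∈ Finset.univ.filter (fun i : Fin (ν₀ + 1) => 2 ≤ (i : ℕ)),
        (i : ℕ) * ((γ₀ i : ℕ)))
        = ∑ i : Fin (ν₀ + 1), (i : ℕ) * l.count (i : ℕ) := by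
      rw [Finset.sum_filter]
      refine Finset.sum_congr rfl fun i _ => ?_
      by_cases h2i : 2 ≤ (i : ℕ)
      · rw [if_pos h2i, hval]
      · rw [if_neg h2i]
        interval_cases hi : (i : ℕ)
        · simp
        · simp [hc1]
    rw [e1, Fin.sum_univ_eq_sum_range (fun i => i * l.count i) (ν₀ + 1),
      sum_range_count l (ν₀ + 1) hlt]
    omega
  rw [if_pos hcond]
  have hcs : cSingle (μ₀, ν₀, l, a) ν₀ μ₀ γ₀ = a := by
    rw [cSingle, if_pos ⟨rfl, rfl, hval⟩]
  have hprod : (∏ i ∈ Finset.univ.filter (fun i : Fin (ν₀ + 1) => 2 ≤ (i : ℕ)),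
      ((iteratedDeriv (i : ℕ) h t : ℝ) : ℂ) ^ ((γ₀ i : ℕ))) = Pc h l t := by
    have e1 : (∏ i ∈ Finset.univ.filter (fun i : Fin (ν₀ + 1) => 2 ≤ (i : ℕ)),
        ((iteratedDeriv (i : ℕ) h t : ℝ) : ℂ) ^ ((γ₀ i : ℕ)))
        = ∏ i : Fin (ν₀ + 1), ((iteratedDeriv (i : ℕ) h t : ℝ) : ℂ) ^ l.count (i : ℕ) := by
      rw [Finset.prod_filter]
      refine Finset.prod_congr rfl fun i _ => ?_
      by_cases h2i : 2 ≤ (i : ℕ)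
      · rw [if_pos h2i, hval]
      · rw [if_neg h2i]
        interval_cases hi : (i : ℕ)
        · simp [hc0]
        · simp [hc1]
    rw [e1, Fin.prod_univ_eq_prod_range
        (fun i => ((iteratedDeriv i h t : ℝ) : ℂ) ^ l.count i) (ν₀ + 1),
      prod_range_count (fun i => ((iteratedDeriv i h t : ℝ) : ℂ)) l (ν₀ + 1) hlt]
    rfl
  rw [hcs, hprod, teval]
  ring

lemma sum_eq_RHS (L : List Term) (hL : ∀ T ∈ L, Inv n T) :
    ((L.map (fun T => teval h f T t)).sum) = RHS n (cList L) h f t := by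
  induction L with
  | nil => rw [RHS_nil]; simp
  | cons T L ih =>
    have hrw : cList (T :: L) = fun ν μ γ => cSingle T ν μ γ + cList L ν μ γ := by
      funext ν μ γ
      simp [cList]
    rw [List.map_cons, List.sum_cons, ih (fun T' hT' => hL T' (List.mem_cons_of_mem _ hT')),
      hrw, RHS_add, RHS_single (hL T (List.mem_cons_self))]

end comb

end DopAux


/-- Structural formula for the `n`-fold iterate of the integration-by-parts operator:
`Dⁿ(f)(t) = ∑_{ν=n}^{2n} ∑_{μ=0}^{ν} (f^{(μ)}(t)/h'(t)^ν)
  ∑_{2γ₂+⋯+νγ_ν = ν-μ} c_{ν,μ,γ} h''(t)^{γ₂} ⋯ h^{(ν)}(t)^{γ_ν}`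
for absolute constants `c_{ν,μ,γ}` depending only on `n` and the indices.
Each tuple `(γ₂,…,γ_ν)` is encoded as a function `γ : Fin (ν+1) → Fin (ν+1)`,
only the coordinates `2 ≤ i ≤ ν` entering the constraint and the product. -/
theorem Dop_iterate_formula (n : ℕ) (hn : 1 ≤ n) :
    ∃ c : (ν : ℕ) → ℕ → ((Fin (ν + 1) → Fin (ν + 1)) → ℂ),
      ∀ h : ℝ → ℝ, ContDiff ℝ (⊤ : ℕ∞) h → (∀ t : ℝ, deriv h t ≠ 0) →
      ∀ f : ℝ → ℂ, ContDiff ℝ (⊤ : ℕ∞) f → HasCompactSupport f →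
      ∀ t : ℝ,
        (Dop h)^[n] f t =
          ∑ ν ∈ Finset.Icc n (2 * n), ∑ μ ∈ Finset.range (ν + 1),
            (iteratedDeriv μ f t / ((deriv h t : ℝ) : ℂ) ^ ν) *
              ∑ γ : Fin (ν + 1) → Fin (ν + 1),
                if (∑ i ∈ Finset.univ.filter (fun i : Fin (ν + 1) => 2 ≤ (i : ℕ)),
                      (i : ℕ) * ((γ i : ℕ))) = ν - μ then
                  c ν μ γ *
                    ∏ i ∈ Finset.univ.filter (fun i : Fin (ν + 1) => 2 ≤ (i : ℕ)),
                      ((iteratedDeriv (i : ℕ) h t : ℝ) : ℂ) ^ ((γ i : ℕ))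
                else 0 := by
  refine ⟨DopAux.cList (DopAux.stepsN n), ?_⟩
  intro h hh hne f hf _ t
  rw [DopAux.iterate_eq hh hf hne n t,
    DopAux.sum_eq_RHS (DopAux.stepsN n) (DopAux.stepsN_inv n)]
  rfl
end

section
/- Let p ≥ 1 be a real number and ε > 0. There exists a constant c = c(p, ε) > 0 with the following property. Let k ≥ 4 be an even integer, let a₁ ∈ ℂ with |a₁|² ≥ k^{−ε}/Γ(k), and let f be a continuous function on the upper half-plane {x + iy : y > 0} whose first Fourier coefficient satisfies ∫₀¹ f(x+iy)·e^{−2πix} dx = a₁ · (4π)^{(k−1)/2} · e^{−2πy} for every y ≥ 1. Then ( ∫₁^{∞} ∫₀¹ |f(x+iy)|^p · y^{kp/2} dx dy / y² )^{1/p} ≥ c · k^{1/4 − 3/(2p) − ε}. -/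
open MeasureTheory
open Real

noncomputable def cLB (p : ℝ) : ℝ := Real.exp (-(86:ℝ)) * (4*π) ^ (-(1:ℝ)/2 - 1/p)

lemma cLB_pos (p : ℝ) : 0 < cLB p := by
  unfold cLB; have := Real.pi_pos; positivity

lemma fact_log_bound (k : ℕ) (hk : 1 ≤ k) :
    Real.log ((k-1).factorial : ℝ) ≤ 1 - (k:ℝ) + ((k:ℝ) - 1/2) * Real.log k := by
  have hk0 : (0:ℝ) < k := by exact_mod_cast hk
  have h1 : Stirling.stirlingSeq k ≤ Real.exp 1 / Real.sqrt 2 := by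
    have := Stirling.stirlingSeq'_antitone (Nat.zero_le (k-1))
    simpa [Function.comp, Nat.succ_eq_add_one, Nat.sub_add_cancel hk] using this
  have hden : (0:ℝ) < Real.sqrt (2*k) * ((k:ℝ)/Real.exp 1)^k := by positivity
  have h2 : ((k.factorial : ℝ)) ≤ Real.exp 1 / Real.sqrt 2 * (Real.sqrt (2*k) * ((k:ℝ)/Real.exp 1)^k) := by
    have := h1
    rw [Stirling.stirlingSeq, div_le_iff₀ hden] at this
    exact this
  have hsqrt : Real.sqrt (2*k) = Real.sqrt 2 * Real.sqrt k := Real.sqrt_mul (by norm_num) _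
  have h3 : ((k.factorial : ℝ)) ≤ Real.exp 1 * Real.sqrt k * ((k:ℝ)/Real.exp 1)^k := by
    calc ((k.factorial : ℝ)) ≤ _ := h2
    _ = Real.exp 1 * Real.sqrt k * ((k:ℝ)/Real.exp 1)^k := by
        rw [hsqrt]; field_simp
  have hfac : ((k-1).factorial : ℝ) = (k.factorial : ℝ) / k := by
    rw [eq_div_iff hk0.ne']
    rw [← Nat.cast_mul]
    norm_cast
    rw [mul_comm]
    exact Nat.mul_factorial_pred (by omega)
  have hpos : (0:ℝ) < ((k-1).factorial : ℝ) := by positivity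
  have h4 : ((k-1).factorial : ℝ) ≤ Real.exp 1 * Real.sqrt k * ((k:ℝ)/Real.exp 1)^k / k := by
    rw [hfac]; gcongr
  calc Real.log ((k-1).factorial : ℝ) ≤ Real.log (Real.exp 1 * Real.sqrt k * ((k:ℝ)/Real.exp 1)^k / k) :=
        Real.log_le_log hpos h4
  _ = 1 - (k:ℝ) + ((k:ℝ) - 1/2) * Real.log k := by
      have hz1 : (Real.exp 1 : ℝ) ≠ 0 := (Real.exp_pos 1).ne'
      have hz4 : Real.sqrt k ≠ 0 := by positivity
      have hz5 : Real.exp 1 * Real.sqrt k ≠ 0 := mul_ne_zero hz1 hz4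
      have hz2 : (((k:ℝ))/Real.exp 1)^k ≠ 0 := by positivity
      rw [Real.log_div (mul_ne_zero hz5 hz2) hk0.ne', Real.log_mul hz5 hz2,
        Real.log_mul hz1 hz4, Real.log_exp, Real.log_pow,
        Real.log_div hk0.ne' hz1, Real.log_exp, Real.log_sqrt hk0.le]
      ring


lemma log_quad (u : ℝ) (hu : 0 ≤ u) : u - u^2 ≤ Real.log (1+u) := by
  have h1 : 0 < 1 + u := by linarith
  have h := Real.one_sub_inv_le_log_of_pos h1
  have h2 : (1+u)⁻¹ ≤ 1 - u + u^2 := by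
    rw [inv_eq_one_div, div_le_iff₀ h1]; nlinarith
  linarith

set_option maxHeartbeats 1000000 in
lemma gauss_window (k : ℕ) (hk : 4 ≤ k) (y : ℝ)
    (hy1 : (k:ℝ)/(4*π) + 1 ≤ y)
    (hy2 : y ≤ ((k:ℝ)/(4*π) + 1) * (1 + (Real.sqrt k)⁻¹)) :
    Real.exp (-85) * Real.exp (-(k:ℝ)/2) * ((k:ℝ)/(4*π))^((k:ℝ)/2)
      ≤ Real.exp (-(2*π)*y) * y ^ ((k:ℝ)/2) := by
  have hπ : 0 < π := Real.pi_pos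
  have hk0 : (4:ℝ) ≤ (k:ℝ) := by exact_mod_cast hk
  have hK : (0:ℝ) < (k:ℝ)/(4*π) := by positivity
  set K : ℝ := (k:ℝ)/(4*π) with hKdef
  have hs0 : 0 < Real.sqrt k := Real.sqrt_pos.2 (by linarith)
  set s : ℝ := (Real.sqrt k)⁻¹ with hsdef
  have hs : 0 < s := by positivity
  have hs2 : s^2 = ((k:ℝ))⁻¹ := by
    rw [hsdef, ← one_div, div_pow, one_pow, Real.sq_sqrt (by linarith), one_div]
  have hshalf : s ≤ 1/2 := by
    rw [hsdef, inv_le_comm₀ (by positivity) (by norm_num)]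
    rw [show (1/2 : ℝ)⁻¹ = 2 by norm_num]
    have : Real.sqrt 4 ≤ Real.sqrt k := Real.sqrt_le_sqrt hk0
    rw [show (4:ℝ) = 2^2 by norm_num, Real.sqrt_sq (by norm_num)] at this
    linarith
  set u : ℝ := y/K - 1 with hudef
  have hu0 : 0 ≤ u := by
    rw [hudef, sub_nonneg, le_div_iff₀ hK]; linarith
  have hyu : y = K * (1+u) := by rw [hudef]; field_simp; ring
  -- bound on u
  have hKinv : K⁻¹ = 4*π*s^2 := by rw [hs2, hKdef]; field_simp
  have hKinv_le : K⁻¹ ≤ 2*π*s := by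
    rw [hKinv]
    calc 4*π*s^2 = (2*π*s)*(2*s) := by ring
    _ ≤ (2*π*s)*1 := by
        apply mul_le_mul_of_nonneg_left (by linarith) (by positivity)
    _ = 2*π*s := mul_one _
  have hKinv_le2 : K⁻¹ ≤ π := by
    rw [hKinv]
    have hs4 : s^2 ≤ 1/4 := by nlinarith
    nlinarith
  clear_value K s u
  have hu_le : u ≤ (3*π+1) * s := by
    have h1 : y/K ≤ (1 + K⁻¹)*(1+s) := by
      rw [div_le_iff₀ hK]
      calc y ≤ (K + 1) * (1 + s) := hy2
      _ = (1 + K⁻¹)*(1+s)*K := by field_simp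
    have h3 : u ≤ s + K⁻¹ + K⁻¹*s := by
      have h2 : (1 + K⁻¹)*(1+s) - 1 = s + K⁻¹ + K⁻¹*s := by ring
      rw [hudef]; linarith
    nlinarith [mul_le_mul_of_nonneg_right hKinv_le2 hs.le]
  have hku2 : (k:ℝ)/2 * u^2 ≤ 85 := by
    have h1 : u^2 ≤ (3*π+1)^2 * s^2 := by nlinarith
    have h2 := mul_le_mul_of_nonneg_left h1 (by positivity : (0:ℝ) ≤ (k:ℝ)/2)
    rw [hs2] at h2
    have h3 : (k:ℝ)/2 * ((3*π+1)^2 * ((k:ℝ))⁻¹) = (3*π+1)^2/2 := by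
      field_simp
    rw [h3] at h2
    have hb : (3*π+1) ≤ 13 := by nlinarith [Real.pi_le_four]
    have hb2 : (3*π+1)^2 ≤ 169 := by nlinarith
    linarith
  -- main computation
  have hy0 : 0 < y := by linarith
  have h2piK : 2*π*K = (k:ℝ)/2 := by rw [hKdef]; field_simp; ring
  have hrw : Real.exp (-(2*π)*y) * y ^ ((k:ℝ)/2)
      = Real.exp (-(k:ℝ)/2) * K^((k:ℝ)/2) * Real.exp ((k:ℝ)/2 * (Real.log (1+u) - u)) := by
    rw [hyu, Real.mul_rpow hK.le (by linarith), Real.rpow_def_of_pos (by linarith : (0:ℝ) < 1+u)]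
    calc Real.exp (-(2*π)*(K*(1+u))) * (K ^ ((k:ℝ)/2) * Real.exp (Real.log (1+u) * ((k:ℝ)/2)))
        = K ^ ((k:ℝ)/2) * Real.exp ((-(2*π)*(K*(1+u))) + Real.log (1+u) * ((k:ℝ)/2)) := by
          rw [Real.exp_add]; ring
    _ = K ^ ((k:ℝ)/2) * Real.exp ((-(k:ℝ)/2) + (k:ℝ)/2 * (Real.log (1+u) - u)) := by
          have heq : (-(2*π)*(K*(1+u))) + Real.log (1+u) * ((k:ℝ)/2)
              = (-(k:ℝ)/2) + (k:ℝ)/2 * (Real.log (1+u) - u) := by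
            linear_combination (-(1+u)) * h2piK
          rw [heq]
    _ = Real.exp (-(k:ℝ)/2) * K^((k:ℝ)/2) * Real.exp ((k:ℝ)/2 * (Real.log (1+u) - u)) := by
          rw [Real.exp_add]; ring
  rw [hrw]
  have hexp : Real.exp (-85) ≤ Real.exp ((k:ℝ)/2 * (Real.log (1+u) - u)) := by
    apply Real.exp_le_exp.2
    have hlog := log_quad u hu0
    have h5 := mul_le_mul_of_nonneg_left (by linarith : -u^2 ≤ Real.log (1+u) - u)
      (by positivity : (0:ℝ) ≤ (k:ℝ)/2)
    nlinarith
  calc Real.exp (-85) * Real.exp (-(k:ℝ)/2) * K^((k:ℝ)/2)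
      = Real.exp (-(k:ℝ)/2) * K^((k:ℝ)/2) * Real.exp (-85) := by ring
  _ ≤ Real.exp (-(k:ℝ)/2) * K^((k:ℝ)/2) * Real.exp ((k:ℝ)/2 * (Real.log (1+u) - u)) := by
      apply mul_le_mul_of_nonneg_left hexp (by positivity)


lemma y_le_k (k : ℕ) (hk : 4 ≤ k) (y : ℝ)
    (hy2 : y ≤ ((k:ℝ)/(4*π) + 1) * (1 + (Real.sqrt k)⁻¹))
    (hs : (Real.sqrt k)⁻¹ ≤ 1/2) :
    y ≤ (k:ℝ) := by
  have hπ : 3 < π := Real.pi_gt_three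
  have hk4 : (4:ℝ) ≤ (k:ℝ) := by exact_mod_cast hk
  have hK : (k:ℝ)/(4*π) ≤ (k:ℝ)/12 := by
    apply div_le_div_of_nonneg_left (by linarith) (by norm_num) (by linarith)
  have hs0 : 0 ≤ (Real.sqrt k)⁻¹ := by positivity
  have h1 : y ≤ ((k:ℝ)/12 + 1) * (3/2) := by
    calc y ≤ ((k:ℝ)/(4*π) + 1) * (1 + (Real.sqrt k)⁻¹) := hy2
    _ ≤ ((k:ℝ)/12 + 1) * (3/2) := by
        apply mul_le_mul (by linarith) (by linarith) (by linarith) (by positivity)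
  linarith

lemma pointwise_real (k : ℕ) (hk : 4 ≤ k) (p : ℝ) (hp : 1 ≤ p) (a : ℝ) (ha0 : 0 < a) (y : ℝ)
    (hy1 : (k:ℝ)/(4*π) + 1 ≤ y)
    (hy2 : y ≤ ((k:ℝ)/(4*π) + 1) * (1 + (Real.sqrt k)⁻¹)) :
    (a * (4*π)^(((k:ℝ)-1)/2) * Real.exp (-85) * Real.exp (-(k:ℝ)/2)
        * ((k:ℝ)/(4*π))^((k:ℝ)/2)) ^ p / (k:ℝ)^2
      ≤ (a * (4*π)^(((k:ℝ)-1)/2) * Real.exp (-2*π*y)) ^ p * y ^ ((k:ℝ)*p/2) / y^2 := by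
  have hπ : 0 < π := Real.pi_pos
  have hk4 : (4:ℝ) ≤ (k:ℝ) := by exact_mod_cast hk
  have hk0 : (0:ℝ) < (k:ℝ) := by linarith
  have hK : (0:ℝ) < (k:ℝ)/(4*π) := by positivity
  have hy0 : (0:ℝ) < y := by linarith
  have hp0 : (0:ℝ) < p := by linarith
  have hQ : (0:ℝ) < (4*π)^(((k:ℝ)-1)/2) := Real.rpow_pos_of_pos (by positivity) _
  have hshalf : (Real.sqrt k)⁻¹ ≤ 1/2 := by
    rw [inv_le_comm₀ (Real.sqrt_pos.2 hk0) (by norm_num), show (1/2 : ℝ)⁻¹ = 2 by norm_num]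
    have h4 : Real.sqrt 4 ≤ Real.sqrt k := Real.sqrt_le_sqrt hk4
    rw [show (4:ℝ) = 2^2 by norm_num, Real.sqrt_sq (by norm_num)] at h4
    linarith
  have hyk : y ≤ (k:ℝ) := y_le_k k hk y hy2 hshalf
  have hsplit : y ^ ((k:ℝ)*p/2) = (y ^ ((k:ℝ)/2)) ^ p := by
    rw [← Real.rpow_mul hy0.le]
    congr 1; ring
  rw [hsplit, ← Real.mul_rpow (by positivity) (Real.rpow_pos_of_pos hy0 _).le]
  apply div_le_div₀ (by positivity) _ (by positivity) (by nlinarith)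
  apply Real.rpow_le_rpow (by positivity) _ hp0.le
  have hg := gauss_window k hk y hy1 hy2
  calc a * (4*π)^(((k:ℝ)-1)/2) * Real.exp (-85) * Real.exp (-(k:ℝ)/2) * ((k:ℝ)/(4*π))^((k:ℝ)/2)
      = (a * (4*π)^(((k:ℝ)-1)/2)) * (Real.exp (-85) * Real.exp (-(k:ℝ)/2) * ((k:ℝ)/(4*π))^((k:ℝ)/2)) := by ring
  _ ≤ (a * (4*π)^(((k:ℝ)-1)/2)) * (Real.exp (-(2*π)*y) * y ^ ((k:ℝ)/2)) := by
      apply mul_le_mul_of_nonneg_left hg (by positivity)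
  _ = a * (4*π)^(((k:ℝ)-1)/2) * Real.exp (-2*π*y) * y ^ ((k:ℝ)/2) := by
      rw [show -(2*π)*y = -2*π*y by ring]; ring


set_option maxHeartbeats 1000000 in
lemma key_real (p ε : ℝ) (hp : 1 ≤ p) (hε : 0 < ε) (k : ℕ) (hk : 4 ≤ k)
    (a : ℝ) (ha0 : 0 < a) (ha : (k:ℝ)^(-ε) / ((k-1).factorial : ℝ) ≤ a^2) :
    (cLB p * (k:ℝ) ^ ((1:ℝ)/4 - 3/(2*p) - ε)) ^ p
      ≤ (a * (4*π)^(((k:ℝ)-1)/2) * Real.exp (-85) * Real.exp (-(k:ℝ)/2)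
            * ((k:ℝ)/(4*π))^((k:ℝ)/2)) ^ p
        / (k:ℝ)^2 * ((k:ℝ)/(4*π) * (Real.sqrt k)⁻¹) := by
  have hπ : 0 < π := Real.pi_pos
  have hk4 : (4:ℝ) ≤ (k:ℝ) := by exact_mod_cast hk
  have hk0 : (0:ℝ) < (k:ℝ) := by linarith
  have hp0 : 0 < p := by linarith
  have h4π : (0:ℝ) < 4*π := by positivity
  have hK : (0:ℝ) < (k:ℝ)/(4*π) := by positivity
  set L : ℝ := Real.log k with hL
  set M : ℝ := Real.log (4*π) with hM
  set F : ℝ := Real.log ((k-1).factorial : ℝ) with hFdef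
  set t : ℝ := Real.log a with ht
  have hfacpos : (0:ℝ) < ((k-1).factorial : ℝ) := by positivity
  -- collected bounds
  have hL1 : (1:ℝ) ≤ L := by
    rw [hL, Real.le_log_iff_exp_le hk0]
    have := Real.exp_one_lt_d9
    linarith
  have hF : F ≤ 1 - (k:ℝ) + ((k:ℝ) - 1/2) * L := fact_log_bound k (by omega)
  have hA : -ε*L - F ≤ 2*t := by
    have h1 : Real.log ((k:ℝ)^(-ε) / ((k-1).factorial : ℝ)) ≤ Real.log (a^2) :=
      Real.log_le_log (by positivity) ha
    rw [Real.log_div (by positivity) hfacpos.ne', Real.log_rpow hk0, Real.log_pow] at h1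
    rw [hFdef, ht]
    push_cast at h1 ⊢
    linarith
  -- positivity of both sides
  set X : ℝ := a * (4*π)^(((k:ℝ)-1)/2) * Real.exp (-85) * Real.exp (-(k:ℝ)/2)
      * ((k:ℝ)/(4*π))^((k:ℝ)/2) with hX
  have hQ : (0:ℝ) < (4*π)^(((k:ℝ)-1)/2) := Real.rpow_pos_of_pos h4π _
  have hKp : (0:ℝ) < ((k:ℝ)/(4*π))^((k:ℝ)/2) := Real.rpow_pos_of_pos hK _
  have hXpos : 0 < X := by
    rw [hX]; positivity
  have hsq : (0:ℝ) < Real.sqrt k := Real.sqrt_pos.2 hk0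
  have hLpos : 0 < cLB p * (k:ℝ) ^ ((1:ℝ)/4 - 3/(2*p) - ε) :=
    mul_pos (cLB_pos p) (Real.rpow_pos_of_pos hk0 _)
  have hRpos : 0 < X ^ p / (k:ℝ)^2 * ((k:ℝ)/(4*π) * (Real.sqrt k)⁻¹) := by
    have := Real.rpow_pos_of_pos hXpos p
    positivity
  rw [← Real.log_le_log_iff (Real.rpow_pos_of_pos hLpos p) hRpos]
  -- compute logs
  have hlogL : Real.log ((cLB p * (k:ℝ) ^ ((1:ℝ)/4 - 3/(2*p) - ε)) ^ p)
      = p * ((-86 + (-1/2 - 1/p)*M) + ((1:ℝ)/4 - 3/(2*p) - ε) * L) := by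
    rw [Real.log_rpow hLpos, Real.log_mul (cLB_pos p).ne' (Real.rpow_pos_of_pos hk0 _).ne',
      Real.log_rpow hk0]
    unfold cLB
    rw [Real.log_mul (Real.exp_pos _).ne' (Real.rpow_pos_of_pos h4π _).ne',
      Real.log_exp, Real.log_rpow h4π]
    try ring
  have hlogX : Real.log X = t + (((k:ℝ)-1)/2)*M - 85 - (k:ℝ)/2 + (k:ℝ)/2 * (L - M) := by
    rw [hX, Real.log_mul (by positivity) hKp.ne', Real.log_mul (by positivity) (Real.exp_pos _).ne',
      Real.log_mul (by positivity) (Real.exp_pos _).ne', Real.log_mul ha0.ne' hQ.ne',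
      Real.log_exp, Real.log_exp, Real.log_rpow h4π, Real.log_rpow hK,
      Real.log_div hk0.ne' h4π.ne']
    ring
  have hlogR : Real.log (X ^ p / (k:ℝ)^2 * ((k:ℝ)/(4*π) * (Real.sqrt k)⁻¹))
      = p * Real.log X - 2*L + (L - M) - L/2 := by
    rw [Real.log_mul (by positivity) (by positivity), Real.log_div (by positivity) (by positivity),
      Real.log_rpow hXpos, Real.log_mul hK.ne' (by positivity), Real.log_inv,
      Real.log_sqrt hk0.le, Real.log_pow, Real.log_div hk0.ne' h4π.ne']
    push_cast
    ring
  rw [hlogL, hlogR, hlogX]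
  -- final linear arithmetic
  have hA' := mul_le_mul_of_nonneg_left hA hp0.le
  have hF' := mul_le_mul_of_nonneg_left hF hp0.le
  have hpε : 0 ≤ p * ε * L := by positivity
  have hc1 : p * (1/p) = 1 := mul_one_div_cancel hp0.ne'
  have hexpand : p * (-86 + (-1/2 - 1/p)*M + ((1:ℝ)/4 - 3/(2*p) - ε) * L)
      = -86*p - (p/2)*M - M + (p/4)*L - (3/2)*L - p*ε*L := by
    field_simp; ring
  linarith [hA', hF', hpε, hexpand]


set_option maxHeartbeats 1000000 in
/-- Lower bound `‖F‖_p ≫ k^{1/4 - 3/(2p) - ε}` for the `L^p`-norm (restricted to the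
standard cuspidal region `y ≥ 1`, `0 ≤ x ≤ 1`) of a weight-`k` form whose first Fourier
coefficient `a₁` satisfies `|a₁|² ≥ k^{-ε}/Γ(k)`. -/
theorem Lp_lower_bound (p ε : ℝ) (hp : 1 ≤ p) (hε : 0 < ε) :
    ∃ c : ℝ, 0 < c ∧
      ∀ k : ℕ, 4 ≤ k → Even k → ∀ (a₁ : ℂ) (f : ℂ → ℂ),
        ContinuousOn f {z : ℂ | 0 < z.im} →
        (k : ℝ) ^ (-ε) / ((k - 1).factorial : ℝ) ≤ ‖a₁‖ ^ 2 →
        (∀ y : ℝ, 1 ≤ y →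
          (∫ x in (0 : ℝ)..1,
              f ((x : ℂ) + Complex.I * (y : ℂ)) * Complex.exp (-2 * Real.pi * Complex.I * x)) =
            a₁ * (((4 * Real.pi) ^ (((k : ℝ) - 1) / 2) : ℝ) : ℂ) *
              ((Real.exp (-2 * Real.pi * y) : ℝ) : ℂ)) →
        ENNReal.ofReal (c * (k : ℝ) ^ ((1 : ℝ) / 4 - 3 / (2 * p) - ε)) ≤
          (∫⁻ y in Set.Ioi (1 : ℝ), ∫⁻ x in Set.Ioo (0 : ℝ) 1,
              ENNReal.ofReal
                (‖f ((x : ℂ) + Complex.I * (y : ℂ))‖ ^ p * y ^ ((k : ℝ) * p / 2) / y ^ 2)) ^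
            (1 / p) := by
  refine ⟨cLB p, cLB_pos p, ?_⟩
  intro k hk hkeven a₁ f hf ha hFour
  have hπ : 0 < π := Real.pi_pos
  have hk4 : (4:ℝ) ≤ (k:ℝ) := by exact_mod_cast hk
  have hk0 : (0:ℝ) < (k:ℝ) := by linarith
  have hp0 : (0:ℝ) < p := by linarith
  set a : ℝ := ‖a₁‖ with hadef
  have hfac : (0:ℝ) < ((k-1).factorial : ℝ) := by positivity
  have ha2 : (0:ℝ) < a^2 := lt_of_lt_of_le (by positivity) ha
  have ha0 : 0 < a := by
    rcases (norm_nonneg a₁).lt_or_eq with h | h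
    · exact h
    · exfalso; rw [hadef, ← h] at ha2; simp at ha2
  set Q : ℝ := (4*π) ^ (((k:ℝ)-1)/2) with hQdef
  have hQ0 : 0 < Q := Real.rpow_pos_of_pos (by positivity) _
  set K : ℝ := (k:ℝ)/(4*π) with hKdef
  have hK0 : 0 < K := by positivity
  set s : ℝ := (Real.sqrt k)⁻¹ with hsdef
  have hs0 : 0 < s := by positivity
  set X : ℝ := a * Q * Real.exp (-85) * Real.exp (-(k:ℝ)/2) * K^((k:ℝ)/2) with hXdef
  have hX0 : 0 < X := by
    have := Real.rpow_pos_of_pos hK0 ((k:ℝ)/2); rw [hXdef]; positivity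
  have hB0 : 0 < X^p / (k:ℝ)^2 := by
    have := Real.rpow_pos_of_pos hX0 p; positivity
  -- the inner bound for each y in the window
  have hinner : ∀ y : ℝ, y ∈ Set.Ioo (K+1) ((K+1)*(1+s)) →
      ENNReal.ofReal (X^p / (k:ℝ)^2) ≤
        ∫⁻ x in Set.Ioo (0:ℝ) 1,
          ENNReal.ofReal (‖f ((x : ℂ) + Complex.I * (y : ℂ))‖ ^ p * y ^ ((k:ℝ) * p / 2) / y ^ 2) := by
    intro y hy
    have hy1 : K + 1 ≤ y := hy.1.le
    have hy2 : y ≤ (K+1)*(1+s) := hy.2.le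
    have hyge1 : (1:ℝ) ≤ y := by linarith
    have hy0 : (0:ℝ) < y := by linarith
    set h : ℝ → ℂ := fun x => f ((x : ℂ) + Complex.I * (y : ℂ)) with hhdef
    have hcont : Continuous h := by
      apply hf.comp_continuous (by continuity)
      intro x
      simp only [Set.mem_setOf_eq, Complex.add_im, Complex.ofReal_im, Complex.mul_im,
        Complex.I_re, Complex.I_im, Complex.ofReal_re]
      linarith
    have hInt : IntegrableOn h (Set.Ioo (0:ℝ) 1) volume :=
      (hcont.integrableOn_Icc).mono_set Set.Ioo_subset_Icc_self
    -- Fourier coefficient bound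
    have hfour : a * Q * Real.exp (-2*π*y) ≤ ∫ x in (0:ℝ)..1, ‖h x‖ := by
      have h1 := hFour y hyge1
      have h2 : a * Q * Real.exp (-2*π*y)
          = ‖a₁ * ((Q : ℝ) : ℂ) * ((Real.exp (-2*π*y) : ℝ) : ℂ)‖ := by
        simp only [norm_mul, Complex.norm_real, Real.norm_eq_abs]
        rw [abs_of_pos hQ0, abs_of_pos (Real.exp_pos _)]
      rw [h2, ← h1]
      calc ‖∫ x in (0:ℝ)..1, f ((x : ℂ) + Complex.I * (y : ℂ)) * Complex.exp (-2 * π * Complex.I * x)‖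
          ≤ ∫ x in (0:ℝ)..1, ‖f ((x : ℂ) + Complex.I * (y : ℂ)) * Complex.exp (-2 * π * Complex.I * x)‖ :=
            intervalIntegral.norm_integral_le_integral_norm zero_le_one
      _ = ∫ x in (0:ℝ)..1, ‖h x‖ := by
            apply intervalIntegral.integral_congr
            intro x hx
            show ‖f ((x:ℂ) + Complex.I * (y:ℂ)) * Complex.exp (-2 * ↑π * Complex.I * ↑x)‖ = ‖h x‖
            rw [norm_mul]
            have : ‖Complex.exp (-2 * π * Complex.I * x)‖ = 1 := by
              rw [Complex.norm_exp]
              have : (-2 * π * Complex.I * x).re = 0 := by simp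
              rw [this, Real.exp_zero]
            rw [this, mul_one]
    -- convert to lintegral and apply Hölder
    set μ : Measure ℝ := volume.restrict (Set.Ioo (0:ℝ) 1) with hμdef
    haveI : IsProbabilityMeasure μ := by
      constructor
      rw [hμdef, Measure.restrict_apply_univ, Real.volume_Ioo]
      norm_num
    have hIoo : ∫ x in (0:ℝ)..1, ‖h x‖ = ∫ x in Set.Ioo (0:ℝ) 1, ‖h x‖ := by
      rw [intervalIntegral.integral_of_le zero_le_one, ← integral_Ioc_eq_integral_Ioo]
    have hOfReal : ENNReal.ofReal (∫ x in Set.Ioo (0:ℝ) 1, ‖h x‖)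
        = ∫⁻ x, (‖h x‖₊ : ENNReal) ∂μ := by
      rw [ofReal_integral_eq_lintegral_ofReal hInt.norm
        (Filter.Eventually.of_forall fun x => norm_nonneg _)]
      simp_rw [ofReal_norm, enorm_eq_nnnorm]
      rfl
    have hHolder : eLpNorm h 1 μ ≤ eLpNorm h (ENNReal.ofReal p) μ :=
      eLpNorm_le_eLpNorm_of_exponent_le (ENNReal.one_le_ofReal.2 hp)
        hcont.aestronglyMeasurable
    have hL1 : eLpNorm h 1 μ = ∫⁻ x, (‖h x‖₊ : ENNReal) ∂μ := by simp only [eLpNorm_one_eq_lintegral_enorm, enorm_eq_nnnorm]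
    have hLp : eLpNorm h (ENNReal.ofReal p) μ
        = (∫⁻ x, (‖h x‖₊ : ENNReal) ^ p ∂μ) ^ (1/p) := by
      rw [eLpNorm_eq_lintegral_rpow_enorm_toReal (by simp [hp0]) ENNReal.ofReal_ne_top,
        ENNReal.toReal_ofReal hp0.le]
      simp only [enorm_eq_nnnorm]
    have hstep1 : ENNReal.ofReal (a * Q * Real.exp (-2*π*y)) ^ p
        ≤ ∫⁻ x, (‖h x‖₊ : ENNReal) ^ p ∂μ := by
      have h3 : ENNReal.ofReal (a * Q * Real.exp (-2*π*y))
          ≤ (∫⁻ x, (‖h x‖₊ : ENNReal) ^ p ∂μ) ^ (1/p) := by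
        rw [← hLp]
        refine le_trans ?_ hHolder
        rw [hL1, ← hOfReal]
        apply ENNReal.ofReal_le_ofReal
        rw [← hIoo]; exact hfour
      calc ENNReal.ofReal (a * Q * Real.exp (-2*π*y)) ^ p
          ≤ ((∫⁻ x, (‖h x‖₊ : ENNReal) ^ p ∂μ) ^ (1/p)) ^ p := by
            exact ENNReal.rpow_le_rpow h3 hp0.le
      _ = ∫⁻ x, (‖h x‖₊ : ENNReal) ^ p ∂μ := by
            rw [← ENNReal.rpow_mul, one_div, inv_mul_cancel₀ hp0.ne', ENNReal.rpow_one]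
    -- now assemble
    have hconst : ENNReal.ofReal (y ^ ((k:ℝ) * p / 2) / y ^ 2) ≠ ⊤ := ENNReal.ofReal_ne_top
    calc ENNReal.ofReal (X^p / (k:ℝ)^2)
        ≤ ENNReal.ofReal ((a * Q * Real.exp (-2*π*y)) ^ p * y ^ ((k:ℝ)*p/2) / y^2) := by
          apply ENNReal.ofReal_le_ofReal
          exact pointwise_real k hk p hp a ha0 y (hKdef ▸ hy1) (by rw [← hKdef, ← hsdef]; exact hy2)
    _ = ENNReal.ofReal ((a * Q * Real.exp (-2*π*y)) ^ p) * ENNReal.ofReal (y ^ ((k:ℝ)*p/2) / y^2) := by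
          rw [mul_div_assoc ((a * Q * Real.exp (-2*π*y)) ^ p) _ _,
            ENNReal.ofReal_mul (by positivity)]
    _ = ENNReal.ofReal (a * Q * Real.exp (-2*π*y)) ^ p * ENNReal.ofReal (y ^ ((k:ℝ)*p/2) / y^2) := by
          rw [ENNReal.ofReal_rpow_of_pos (by positivity)]
    _ ≤ (∫⁻ x, (‖h x‖₊ : ENNReal) ^ p ∂μ) * ENNReal.ofReal (y ^ ((k:ℝ)*p/2) / y^2) := by
          exact mul_le_mul_left hstep1 _
    _ = ∫⁻ x, (‖h x‖₊ : ENNReal) ^ p * ENNReal.ofReal (y ^ ((k:ℝ)*p/2) / y^2) ∂μ :=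
          (lintegral_mul_const' _ _ hconst).symm
    _ = ∫⁻ x in Set.Ioo (0:ℝ) 1,
          ENNReal.ofReal (‖f ((x : ℂ) + Complex.I * (y : ℂ))‖ ^ p * y ^ ((k:ℝ) * p / 2) / y ^ 2) := by
          rw [hμdef]
          apply lintegral_congr
          intro x
          rw [mul_div_assoc (‖f ((x : ℂ) + Complex.I * (y : ℂ))‖ ^ p) _ _,
            ENNReal.ofReal_mul (by positivity), ← enorm_eq_nnnorm, ← ofReal_norm,
            ENNReal.ofReal_rpow_of_nonneg (norm_nonneg _) hp0.le]
  -- outer integral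
  set W : Set ℝ := Set.Ioo (K+1) ((K+1)*(1+s)) with hWdef
  have hWsub : W ⊆ Set.Ioi (1:ℝ) := by
    intro y hy
    have := hy.1
    simp only [Set.mem_Ioi]
    linarith [hK0]
  have houter : ENNReal.ofReal (X^p / (k:ℝ)^2) * ENNReal.ofReal ((K+1)*s) ≤
      ∫⁻ y in Set.Ioi (1 : ℝ), ∫⁻ x in Set.Ioo (0 : ℝ) 1,
        ENNReal.ofReal (‖f ((x : ℂ) + Complex.I * (y : ℂ))‖ ^ p * y ^ ((k : ℝ) * p / 2) / y ^ 2) := by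
    have hind : ∀ y : ℝ, W.indicator (fun _ => ENNReal.ofReal (X^p / (k:ℝ)^2)) y ≤
        ∫⁻ x in Set.Ioo (0 : ℝ) 1,
          ENNReal.ofReal (‖f ((x : ℂ) + Complex.I * (y : ℂ))‖ ^ p * y ^ ((k : ℝ) * p / 2) / y ^ 2) := by
      intro y
      by_cases hy : y ∈ W
      · rw [Set.indicator_of_mem hy]; exact hinner y hy
      · rw [Set.indicator_of_notMem hy]; exact zero_le
    calc ENNReal.ofReal (X^p / (k:ℝ)^2) * ENNReal.ofReal ((K+1)*s)
        = ∫⁻ y in Set.Ioi (1:ℝ), W.indicator (fun _ => ENNReal.ofReal (X^p / (k:ℝ)^2)) y := by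
          rw [lintegral_indicator measurableSet_Ioo, setLIntegral_const,
            Measure.restrict_apply measurableSet_Ioo,
            Set.inter_eq_self_of_subset_left hWsub, Real.volume_Ioo]
          congr 2
          ring
    _ ≤ _ := lintegral_mono hind
  -- final chain
  have hkeyE : ENNReal.ofReal ((cLB p * (k:ℝ) ^ ((1:ℝ)/4 - 3/(2*p) - ε)) ^ p)
      ≤ ENNReal.ofReal (X^p / (k:ℝ)^2) * ENNReal.ofReal ((K+1)*s) := by
    rw [← ENNReal.ofReal_mul hB0.le]
    apply ENNReal.ofReal_le_ofReal
    calc (cLB p * (k:ℝ) ^ ((1:ℝ)/4 - 3/(2*p) - ε)) ^ p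
        ≤ X^p / (k:ℝ)^2 * (K * s) := key_real p ε hp hε k hk a ha0 ha
    _ ≤ X^p / (k:ℝ)^2 * ((K+1)*s) := by
        apply mul_le_mul_of_nonneg_left _ hB0.le
        apply mul_le_mul_of_nonneg_right (by linarith) hs0.le
  have htot := le_trans hkeyE houter
  have hcpos : 0 < cLB p * (k:ℝ) ^ ((1:ℝ)/4 - 3/(2*p) - ε) :=
    mul_pos (cLB_pos p) (Real.rpow_pos_of_pos hk0 _)
  calc ENNReal.ofReal (cLB p * (k:ℝ) ^ ((1:ℝ)/4 - 3/(2*p) - ε))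
      = (ENNReal.ofReal ((cLB p * (k:ℝ) ^ ((1:ℝ)/4 - 3/(2*p) - ε)) ^ p)) ^ (1/p) := by
        rw [← ENNReal.ofReal_rpow_of_pos hcpos, ← ENNReal.rpow_mul,
          mul_one_div_cancel hp0.ne', ENNReal.rpow_one]
  _ ≤ _ := ENNReal.rpow_le_rpow htot (by positivity)
end

section
/- Let I ⊆ ℝ be an open interval, let F : I → ℂ be smooth with F(x) ≠ 0 for all x ∈ I, and let j ≥ 0 be an integer. Then for all x ∈ I, (d^j/dx^j)(1/F(x)) = (j+1) · Σ_{l=0}^{j} ((−1)^l/(1+l)) · C(j,l) · ( (d^j/dx^j)(F(x)^l) ) / F(x)^{1+l}, where C(j,l) denotes the binomial coefficient. -/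
open Set Finset

lemma hasDerivWithinAt_pow_comp {g : ℝ → ℂ} {g' : ℂ} {s : Set ℝ} {x : ℝ}
    (hg : HasDerivWithinAt g g' s x) (n : ℕ) :
    HasDerivWithinAt (fun y => g y ^ n) ((n : ℂ) * g x ^ (n - 1) * g') s x := by
  induction n with
  | zero => simpa using hasDerivWithinAt_const x s (1 : ℂ)
  | succ m ih =>
    have h := ih.mul hg
    have hval : ((m : ℂ) * g x ^ (m - 1) * g') * g x + g x ^ m * g'
        = (((m + 1 : ℕ)) : ℂ) * g x ^ (m + 1 - 1) * g' := by
      rw [Nat.add_sub_cancel]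
      push_cast
      cases m with
      | zero => simp
      | succ i =>
        simp only [Nat.add_sub_cancel]
        push_cast
        have hpow : g x ^ i * g x = g x ^ (i + 1) := (pow_succ _ _).symm
        linear_combination ((i : ℂ) + 1) * g' * hpow
    rw [hval] at h
    have hfun : ((fun y => g y ^ m) * g) = fun y => g y ^ (m + 1) := by
      funext y; exact (pow_succ _ _).symm
    rw [hfun] at h
    exact h

/-- If `g` vanishes at `x`, then the `j`-th derivative of `h * g^m` vanishes at `x`
whenever `j < m`. -/
lemma vanish_aux {s : Set ℝ} (hs : UniqueDiffOn ℝ s) {g : ℝ → ℂ}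
    (hg : ContDiffOn ℝ (⊤ : ℕ∞) g s) {x : ℝ} (hx : x ∈ s) (hgx : g x = 0) :
    ∀ j : ℕ, ∀ h : ℝ → ℂ, ContDiffOn ℝ (⊤ : ℕ∞) h s → ∀ m : ℕ, j < m →
      iteratedDerivWithin j (fun y => h y * g y ^ m) s x = 0 := by
  intro j
  induction j with
  | zero =>
    intro h _ m hm
    simp [iteratedDerivWithin_zero, hgx]
    omega
  | succ j IH =>
    intro h hh m hm
    obtain ⟨k, rfl⟩ : ∃ k, m = k + 1 := ⟨m - 1, by omega⟩
    have hjk : j < k := by omega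
    rw [iteratedDerivWithin_succ']
    have heq : Set.EqOn (derivWithin (fun y => h y * g y ^ (k + 1)) s)
        (fun y => (derivWithin h s y * g y + (k + 1 : ℂ) * h y * derivWithin g s y) * g y ^ k)
        s := by
      intro y hy
      have hhd : HasDerivWithinAt h (derivWithin h s y) s y :=
        ((hh.differentiableOn (by simp)) y hy).hasDerivWithinAt
      have hgd : HasDerivWithinAt g (derivWithin g s y) s y :=
        ((hg.differentiableOn (by simp)) y hy).hasDerivWithinAt
      have hP : HasDerivWithinAt (fun y => g y ^ (k + 1))
          ((k + 1 : ℂ) * g y ^ k * derivWithin g s y) s y := by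
        simpa using hasDerivWithinAt_pow_comp hgd (k + 1)
      have := (hhd.mul hP).derivWithin (hs.uniqueDiffWithinAt hy)
      rw [show (fun y => h y * g y ^ (k + 1)) = h * fun y => g y ^ (k + 1) from rfl, this]; ring
    rw [iteratedDerivWithin_congr heq hx]
    exact IH (fun y => derivWithin h s y * g y + (k + 1 : ℂ) * h y * derivWithin g s y)
      (((hh.derivWithin hs (by simp)).mul hg).add
        ((contDiffOn_const.mul hh).mul (hg.derivWithin hs (by simp)))) k hjk

lemma iteratedDerivWithin_sum_aux {s : Set ℝ} (hs : UniqueDiffOn ℝ s) {x : ℝ} (hx : x ∈ s)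
    (n : ℕ) (t : Finset ℕ) (f : ℕ → ℝ → ℂ) (hf : ∀ i ∈ t, ContDiffOn ℝ (⊤ : ℕ∞) (f i) s) :
    iteratedDerivWithin n (fun y => ∑ i ∈ t, f i y) s x
      = ∑ i ∈ t, iteratedDerivWithin n (f i) s x := by
  classical
  induction t using Finset.induction with
  | empty =>
    simp only [Finset.sum_empty]
    induction n with
    | zero => simp
    | succ n ihn =>
      rw [iteratedDerivWithin_succ']
      rw [iteratedDerivWithin_congr (fun y hy => (by simp : derivWithin (fun _ => (0:ℂ)) s y = 0)
        ) hx]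
      exact ihn
  | insert a t' hnot ih =>
    rw [Finset.sum_insert hnot]
    have h1 : ContDiffOn ℝ (n : ℕ∞) (f a) s := (hf a (Finset.mem_insert_self a t')).of_le (by exact_mod_cast le_top)
    have h2 : ContDiffOn ℝ (n : ℕ∞) (fun y => ∑ i ∈ t', f i y) s := by
      apply ContDiffOn.sum
      intro i hi
      exact (hf i (Finset.mem_insert_of_mem hi)).of_le (by exact_mod_cast le_top)
    rw [show (fun y => ∑ i ∈ insert a t', f i y)
        = ((f a) + (fun y => ∑ i ∈ t', f i y)) by
      funext y; simp [Finset.sum_insert hnot]]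
    rw [iteratedDerivWithin_add hx hs (h1 x hx) (h2 x hx),
      ih (fun i hi => hf i (Finset.mem_insert_of_mem hi))]

/-- Derivatives of a reciprocal in terms of derivatives of powers: for smooth
nonvanishing `F` on an open interval,
`(1/F)^{(j)} = (j+1) ∑_{l=0}^{j} ((-1)^l/(1+l)) C(j,l) (F^l)^{(j)} / F^{1+l}`. -/
theorem iteratedDeriv_inv_formula (a b : ℝ) (F : ℝ → ℂ)
    (hF : ContDiffOn ℝ (⊤ : ℕ∞) F (Set.Ioo a b))
    (hF0 : ∀ x ∈ Set.Ioo a b, F x ≠ 0) (j : ℕ) :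
    ∀ x ∈ Set.Ioo a b,
      iteratedDerivWithin j (fun y => (F y)⁻¹) (Set.Ioo a b) x =
        ((j : ℂ) + 1) * ∑ l ∈ Finset.range (j + 1),
          ((-1 : ℂ) ^ l / (1 + (l : ℂ))) * ((j.choose l : ℕ) : ℂ) *
            (iteratedDerivWithin j (fun y => F y ^ l) (Set.Ioo a b) x / F x ^ (1 + l)) := by
  intro x hx
  set s : Set ℝ := Set.Ioo a b with hsdef
  have hso : IsOpen s := isOpen_Ioo
  have hs : UniqueDiffOn ℝ s := hso.uniqueDiffOn
  set c : ℂ := F x with hc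
  have hc0 : c ≠ 0 := hF0 x hx
  set coeff : ℕ → ℂ := fun l => (-1 : ℂ) ^ l * ((j + 1).choose (l + 1) : ℂ) / c ^ (l + 1)
    with hcoeff
  -- smoothness facts
  have hFi : ContDiffOn ℝ (⊤ : ℕ∞) (fun y => (F y)⁻¹) s := hF.inv hF0
  have hFp : ∀ l : ℕ, ContDiffOn ℝ (⊤ : ℕ∞) (fun y => F y ^ l) s := fun l => hF.pow l
  -- the auxiliary vanishing function
  have hgsm : ContDiffOn ℝ (⊤ : ℕ∞) (fun y => 1 - F y / c) s := by
    have : (fun y => 1 - F y / c) = fun y => 1 - F y * c⁻¹ := by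
      funext y; rw [div_eq_mul_inv]
    rw [this]
    exact contDiffOn_const.sub (hF.mul contDiffOn_const)
  have h0 : iteratedDerivWithin j (fun y => (F y)⁻¹ * (1 - F y / c) ^ (j + 1)) s x = 0 :=
    vanish_aux hs hgsm hx (by simp [← hc, hc0]) j _ hFi (j + 1) (Nat.lt_succ_self j)
  -- algebraic identity
  have heq : Set.EqOn (fun y => (F y)⁻¹ * (1 - F y / c) ^ (j + 1))
      (fun y => (F y)⁻¹ - ∑ l ∈ Finset.range (j + 1), coeff l * F y ^ l) s := by
    intro y hy
    have hFy : F y ≠ 0 := hF0 y hy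
    have hbin : (1 - F y / c) ^ (j + 1)
        = ∑ k ∈ Finset.range (j + 2), (-(F y / c)) ^ k * ((j + 1).choose k : ℂ) := by
      rw [sub_eq_add_neg, add_comm, add_pow]
      apply Finset.sum_congr rfl
      intro k hk
      simp
    simp only
    rw [hbin, Finset.mul_sum, Finset.sum_range_succ']
    have h00 : (F y)⁻¹ * ((-(F y / c)) ^ 0 * ((j + 1).choose 0 : ℂ)) = (F y)⁻¹ := by simp
    rw [h00]
    have : ∀ l ∈ Finset.range (j + 1),
        (F y)⁻¹ * ((-(F y / c)) ^ (l + 1) * ((j + 1).choose (l + 1) : ℂ))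
          = -(coeff l * F y ^ l) := by
      intro l _
      rw [hcoeff]
      simp only
      rw [neg_pow, div_pow]
      field_simp
      ring
    rw [Finset.sum_congr rfl this]
    rw [Finset.sum_neg_distrib]
    ring
  have h1 : iteratedDerivWithin j
      (fun y => (F y)⁻¹ - ∑ l ∈ Finset.range (j + 1), coeff l * F y ^ l) s x = 0 := by
    rw [← iteratedDerivWithin_congr heq hx]
    exact h0
  have hSsm : ∀ l : ℕ, ContDiffOn ℝ (⊤ : ℕ∞) (fun y => coeff l * F y ^ l) s := fun l =>
    contDiffOn_const.mul (hFp l)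
  have hsub : iteratedDerivWithin j
      (fun y => (F y)⁻¹ - ∑ l ∈ Finset.range (j + 1), coeff l * F y ^ l) s x
      = iteratedDerivWithin j (fun y => (F y)⁻¹) s x
        - iteratedDerivWithin j (fun y => ∑ l ∈ Finset.range (j + 1), coeff l * F y ^ l) s x := by
    have hFi' : ContDiffOn ℝ (j : ℕ∞) (fun y => (F y)⁻¹) s := hFi.of_le (by exact_mod_cast le_top)
    have hS' : ContDiffOn ℝ (j : ℕ∞) (fun y => ∑ l ∈ Finset.range (j + 1), coeff l * F y ^ l) s :=
      ContDiffOn.sum (fun l _ => (hSsm l).of_le (by exact_mod_cast le_top))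
    have := iteratedDerivWithin_sub hx hs (hFi' x hx) (hS' x hx)
    simpa [Pi.sub_def] using this
  have hsum : iteratedDerivWithin j
      (fun y => ∑ l ∈ Finset.range (j + 1), coeff l * F y ^ l) s x
      = ∑ l ∈ Finset.range (j + 1), coeff l * iteratedDerivWithin j (fun y => F y ^ l) s x := by
    rw [iteratedDerivWithin_sum_aux hs hx j _ _ (fun l _ => hSsm l)]
    apply Finset.sum_congr rfl
    intro l _
    have hp' : ContDiffOn ℝ (j : ℕ∞) (fun y => F y ^ l) s := (hFp l).of_le (by exact_mod_cast le_top)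
    have := iteratedDerivWithin_const_smul (R := ℂ) hx hs (coeff l) (hp' x hx)
    simpa [smul_eq_mul] using this
  have key : iteratedDerivWithin j (fun y => (F y)⁻¹) s x
      = ∑ l ∈ Finset.range (j + 1), coeff l * iteratedDerivWithin j (fun y => F y ^ l) s x := by
    have h2 := h1
    rw [hsub, hsum] at h2
    exact sub_eq_zero.mp h2
  rw [key, Finset.mul_sum]
  apply Finset.sum_congr rfl
  intro l hl
  set D : ℂ := iteratedDerivWithin j (fun y => F y ^ l) s x with hD
  have hl1 : (1 : ℂ) + (l : ℂ) ≠ 0 := by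
    have : (0 : ℂ) ≠ 1 + (l : ℂ) := by
      exact_mod_cast (Nat.cast_injective.ne (by omega : (0 : ℕ) ≠ 1 + l))
    exact this.symm
  have hcast : ((j : ℂ) + 1) * (j.choose l : ℂ) = (1 + (l : ℂ)) * ((j + 1).choose (l + 1) : ℂ) := by
    have := Nat.add_one_mul_choose_eq j l
    have h := congrArg (fun n : ℕ => (n : ℂ)) this
    push_cast at h
    linear_combination h
  rw [hcoeff]
  simp only
  have hp : c ^ (l + 1) = c ^ (1 + l) := by rw [Nat.add_comm]
  rw [hp]
  have hcp : c ^ (1 + l) ≠ 0 := pow_ne_zero _ hc0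
  field_simp
  linear_combination (-D) * hcast
end

section
/- For every ε > 0 there is a constant C = C(ε) such that the following holds. Let k ≥ 2 and l ≥ 2 be integers, and let λ : ℕ → ℝ satisfy |λ(n)| ≤ τ(n) for all n ≥ 1. Then | Σ_{m=1}^{l−1} λ(m)·λ(l−m)·( 2√(m(l−m)) / l )^{k−1} | ≤ C · l^{ε} · ( 1 + l/√k ). -/
set_option maxHeartbeats 1000000

open Finset in
lemma tau_rpow_bound (δ : ℝ) (hδ : 0 < δ) :
    ∃ C : ℝ, 1 ≤ C ∧ ∀ n : ℕ, 1 ≤ n → ((n.divisors.card : ℝ)) ≤ C * (n : ℝ) ^ δ := by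
  set c : ℝ := δ * Real.log 2 with hcdef
  have hc : 0 < c := mul_pos hδ (Real.log_pos one_lt_two)
  set B : ℝ := 1 + 1 / c with hBdef
  have hB : 1 ≤ B := by
    have h1c : 0 < 1 / c := by positivity
    rw [hBdef]; linarith
  set P : ℕ := ⌈(2 : ℝ) ^ (1 / δ)⌉₊ with hPdef
  refine ⟨B ^ P, one_le_pow₀ hB, ?_⟩
  intro n hn
  have hn0 : n ≠ 0 := by omega
  rw [Nat.card_divisors hn0]
  -- the weight function
  set w : ℕ → ℝ := fun p => if (p : ℝ) < (2 : ℝ) ^ (1 / δ) then B else 1 with hwdef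
  -- pointwise bound
  have key : ∀ p ∈ n.primeFactors,
      ((n.factorization p + 1 : ℕ) : ℝ) ≤ w p * (p : ℝ) ^ ((n.factorization p : ℝ) * δ) := by
    intro p hp
    have hpp : p.Prime := Nat.prime_of_mem_primeFactors hp
    have hp2 : (2 : ℝ) ≤ (p : ℝ) := by exact_mod_cast hpp.two_le
    have hppos : (0 : ℝ) < p := by linarith
    set a : ℕ := n.factorization p with hadef
    by_cases hsmall : (p : ℝ) < (2 : ℝ) ^ (1 / δ)
    · -- small prime : a + 1 ≤ B * 2^(aδ) ≤ B * p^(aδ)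
      simp only [hwdef, if_pos hsmall]
      have h2le : (2 : ℝ) ^ ((a : ℝ) * δ) ≤ (p : ℝ) ^ ((a : ℝ) * δ) :=
        Real.rpow_le_rpow (by norm_num) hp2 (by positivity)
      have hexp : (2 : ℝ) ^ ((a : ℝ) * δ) = Real.exp ((a : ℝ) * c) := by
        rw [Real.rpow_def_of_pos (by norm_num : (0:ℝ) < 2)]
        ring_nf
        rw [hcdef]; ring_nf
      have h1 : ((a : ℝ) + 1) ≤ B * (2 : ℝ) ^ ((a : ℝ) * δ) := by
        rw [hexp, hBdef]
        have he : 1 + (a : ℝ) * c ≤ Real.exp ((a : ℝ) * c) := by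
          have := Real.add_one_le_exp ((a : ℝ) * c); linarith
        have ha0 : (0 : ℝ) ≤ a := Nat.cast_nonneg a
        have hepos : (0:ℝ) < Real.exp ((a:ℝ)*c) := Real.exp_pos _
        have h2 : (1 + 1/c) * (1 + (a:ℝ)*c) ≤ (1 + 1/c) * Real.exp ((a:ℝ)*c) := by
          apply mul_le_mul_of_nonneg_left he (by positivity)
        have h3 : (a : ℝ) + 1 ≤ (1 + 1/c) * (1 + (a:ℝ)*c) := by
          have : (1 + 1/c) * (1 + (a:ℝ)*c) = 1 + (a:ℝ)*c + 1/c + (a:ℝ) := by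
            field_simp; ring
          rw [this]
          have : 0 ≤ (a:ℝ)*c := by positivity
          have : 0 < 1/c := by positivity
          linarith [mul_nonneg ha0 hc.le]
        linarith
      push_cast
      calc ((a : ℝ) + 1) ≤ B * (2 : ℝ) ^ ((a : ℝ) * δ) := h1
        _ ≤ B * (p : ℝ) ^ ((a : ℝ) * δ) := by
            apply mul_le_mul_of_nonneg_left h2le (by linarith)
    · -- large prime : a + 1 ≤ 2^a ≤ (p^δ)^a
      simp only [hwdef, if_neg hsmall, one_mul]
      push_neg at hsmall
      have hpd : (2 : ℝ) ≤ (p : ℝ) ^ δ := by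
        have h := Real.rpow_le_rpow (by positivity) hsmall hδ.le
        have h2 : ((2:ℝ) ^ (1/δ)) ^ δ = 2 := by
          rw [← Real.rpow_mul (by norm_num), one_div, inv_mul_cancel₀ (ne_of_gt hδ), Real.rpow_one]
        rwa [h2] at h
      have h2a : ((a : ℝ) + 1) ≤ (2 : ℝ) ^ (a : ℕ) := by
        exact_mod_cast Nat.lt_two_pow_self (n := a)
      have : ((p : ℝ) ^ δ) ^ (a : ℕ) = (p : ℝ) ^ ((a : ℝ) * δ) := by
        rw [← Real.rpow_natCast ((p:ℝ)^δ) a, ← Real.rpow_mul (by positivity), mul_comm]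
      push_cast
      calc ((a : ℝ) + 1) ≤ (2:ℝ) ^ (a : ℕ) := h2a
        _ ≤ ((p : ℝ) ^ δ) ^ (a : ℕ) := pow_le_pow_left₀ (by norm_num) hpd a
        _ = (p : ℝ) ^ ((a : ℝ) * δ) := this
  -- assemble
  have hprod : ((n.primeFactors.prod fun p => n.factorization p + 1 : ℕ) : ℝ)
      ≤ (∏ p ∈ n.primeFactors, w p) * ∏ p ∈ n.primeFactors, (p : ℝ) ^ ((n.factorization p : ℝ) * δ) := by
    push_cast
    rw [← Finset.prod_mul_distrib]
    apply Finset.prod_le_prod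
    · intro p hp; positivity
    · intro p hp
      have := key p hp
      push_cast at this ⊢
      exact this
  have hw : (∏ p ∈ n.primeFactors, w p) ≤ B ^ P := by
    have : (∏ p ∈ n.primeFactors, w p)
        = B ^ (n.primeFactors.filter fun p : ℕ => (p : ℝ) < (2:ℝ) ^ (1/δ)).card := by
      rw [hwdef, Finset.prod_ite, Finset.prod_const, Finset.prod_const, one_pow, mul_one]
    rw [this]
    apply pow_le_pow_right₀ hB
    have hsub : (n.primeFactors.filter fun p : ℕ => (p : ℝ) < (2:ℝ) ^ (1/δ)) ⊆ Finset.range P := by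
      intro p hp
      rw [Finset.mem_filter] at hp
      rw [Finset.mem_range]
      have h1 : (p : ℝ) < (2:ℝ) ^ (1/δ) := hp.2
      have h2 : ((2:ℝ)) ^ (1/δ) ≤ (P : ℝ) := Nat.le_ceil _
      exact_mod_cast h1.trans_le h2
    calc (n.primeFactors.filter fun p : ℕ => (p : ℝ) < (2:ℝ) ^ (1/δ)).card
        ≤ (Finset.range P).card := Finset.card_le_card hsub
      _ = P := Finset.card_range P
  have hnd : (∏ p ∈ n.primeFactors, (p : ℝ) ^ ((n.factorization p : ℝ) * δ)) = (n : ℝ) ^ δ := by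
    have h1 : (n : ℝ) = ∏ p ∈ n.primeFactors, (p : ℝ) ^ (n.factorization p) := by
      conv_lhs => rw [← Nat.factorization_prod_pow_eq_self hn0]
      rw [Nat.prod_factorization_eq_prod_primeFactors]
      push_cast
      rfl
    rw [h1, ← Real.finset_prod_rpow _ _ (fun p _ => by positivity) δ]
    apply Finset.prod_congr rfl
    intro p hp
    have hppos : (0:ℝ) ≤ (p : ℝ) := Nat.cast_nonneg p
    rw [← Real.rpow_natCast (p:ℝ) (n.factorization p), ← Real.rpow_mul hppos]
  calc ((n.primeFactors.prod fun p => n.factorization p + 1 : ℕ) : ℝ)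
      ≤ (∏ p ∈ n.primeFactors, w p) * ∏ p ∈ n.primeFactors, (p : ℝ) ^ ((n.factorization p : ℝ) * δ) := hprod
    _ ≤ B ^ P * (n:ℝ) ^ δ := by
        rw [hnd]
        apply mul_le_mul_of_nonneg_right hw (by positivity)

lemma sum_inv_le_one_add_log (n : ℕ) :
    ∑ j ∈ Finset.Icc 1 n, ((j : ℝ))⁻¹ ≤ 1 + Real.log n := by
  have h := harmonic_le_one_add_log n
  rw [harmonic_eq_sum_Icc] at h
  push_cast at h
  exact h

/-- Trivial bound for the shifted convolution sum
`T(l) = ∑_{m+n=l} λ(m)λ(n)(2√(mn)/(m+n))^{k-1} ≪ l^ε (1 + l/√k)`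
under the divisor bound `|λ(n)| ≤ τ(n)`. -/
theorem shifted_convolution_bound (ε : ℝ) (hε : 0 < ε) :
    ∃ C : ℝ, ∀ k l : ℕ, 2 ≤ k → 2 ≤ l → ∀ lam : ℕ → ℝ,
      (∀ n : ℕ, 1 ≤ n → |lam n| ≤ (n.divisors.card : ℝ)) →
      |∑ m ∈ Finset.Ico 1 l, lam m * lam (l - m) *
          (2 * Real.sqrt ((m : ℝ) * ((l - m : ℕ) : ℝ)) / (l : ℝ)) ^ (k - 1)| ≤
        C * (l : ℝ) ^ ε * (1 + (l : ℝ) / Real.sqrt (k : ℝ)) := by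
  classical
  obtain ⟨C1, hC1, htau⟩ := tau_rpow_bound (ε / 4) (by positivity)
  refine ⟨C1 ^ 2 * (10 + 10 / ε), ?_⟩
  intro k l hk hl lam hlam
  have hl0 : (0 : ℝ) < l := by exact_mod_cast Nat.lt_of_lt_of_le two_pos hl |>.trans_le le_rfl
  have hL1 : (1 : ℝ) ≤ (l : ℝ) := by exact_mod_cast Nat.one_le_of_lt hl
  have hk1 : (1 : ℝ) ≤ (k : ℝ) - 1 := by
    have : (2 : ℝ) ≤ (k : ℝ) := by exact_mod_cast hk
    linarith
  set s : ℝ := Real.sqrt ((k : ℝ) - 1) with hsdef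
  have hs0 : 0 < s := Real.sqrt_pos.mpr (by linarith)
  have hs2 : s ^ 2 = (k : ℝ) - 1 := Real.sq_sqrt (by linarith)
  set A : ℝ := (l : ℝ) / s with hAdef
  have hA0 : 0 ≤ A := by positivity
  set J : ℕ → ℕ := fun m => (l - 2 * m) + (2 * m - l) with hJdef
  set F : ℕ → ℝ := fun j => if j = 0 then 1 else min 1 (A / j) with hFdef
  have hF0 : ∀ j, 0 ≤ F j := by
    intro j
    rw [hFdef]
    dsimp only
    split_ifs
    · norm_num
    · exact le_min (by norm_num) (by positivity) |>.trans (min_le_min le_rfl le_rfl) |>.trans le_rfl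
  -- the power factor and its bounds
  have key : ∀ m ∈ Finset.Ico 1 l,
      |lam m * lam (l - m) *
        (2 * Real.sqrt ((m : ℝ) * ((l - m : ℕ) : ℝ)) / (l : ℝ)) ^ (k - 1)|
      ≤ (C1 ^ 2 * (l : ℝ) ^ (ε / 2)) * F (J m) := by
    intro m hm
    rw [Finset.mem_Ico] at hm
    obtain ⟨hm1, hml⟩ := hm
    have hmn : ((l - m : ℕ) : ℝ) = (l : ℝ) - m := by
      rw [Nat.cast_sub hml.le]
    have hn1 : 1 ≤ l - m := by omega
    set u : ℝ := 2 * Real.sqrt ((m : ℝ) * ((l - m : ℕ) : ℝ)) / (l : ℝ) with hudef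
    have hmR0 : (0:ℝ) ≤ (m:ℝ) := Nat.cast_nonneg m
    have hmRl : (m:ℝ) < (l:ℝ) := by exact_mod_cast hml
    have hm1R : (1:ℝ) ≤ (m:ℝ) := by exact_mod_cast hm1
    have hsq : Real.sqrt ((m : ℝ) * ((l - m : ℕ) : ℝ)) ^ 2 = (m : ℝ) * ((l - m : ℕ) : ℝ) :=
      Real.sq_sqrt (by rw [hmn]; nlinarith)
    have hu0 : 0 ≤ u := by
      rw [hudef]
      positivity
    have hu1 : u ≤ 1 := by
      rw [hudef, div_le_one hl0]
      have h1 : (m : ℝ) * ((l - m : ℕ) : ℝ) ≤ ((l : ℝ) / 2) ^ 2 := by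
        rw [hmn]; nlinarith [sq_nonneg ((l:ℝ) - 2*(m:ℝ))]
      calc 2 * Real.sqrt ((m : ℝ) * ((l - m : ℕ) : ℝ))
          ≤ 2 * Real.sqrt (((l : ℝ) / 2) ^ 2) := by
            have := Real.sqrt_le_sqrt h1
            linarith
        _ = (l : ℝ) := by
            rw [Real.sqrt_sq (by positivity)]; ring
    have hr0 : 0 ≤ u ^ (k - 1) := pow_nonneg hu0 _
    have hr1 : u ^ (k - 1) ≤ 1 := pow_le_one₀ hu0 hu1
    -- the key decay bound
    have hrF : u ^ (k - 1) ≤ F (J m) := by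
      rw [hFdef]
      dsimp only
      by_cases hj : J m = 0
      · rw [if_pos hj]; exact hr1
      · rw [if_neg hj]
        refine le_min hr1 ?_
        set x : ℝ := ((J m : ℕ) : ℝ) with hxdef
        have hx0 : 0 < x := by
          rw [hxdef]
          exact_mod_cast Nat.pos_of_ne_zero hj
        have hx2 : x ^ 2 = ((l : ℝ) - 2 * m) ^ 2 := by
          rcases le_total (2 * m) l with h | h
          · have hJm : J m = l - 2 * m := by simp only [hJdef]; omega
            rw [hxdef, hJm, Nat.cast_sub h]
            push_cast
            ring
          · have hJm : J m = 2 * m - l := by simp only [hJdef]; omega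
            rw [hxdef, hJm, Nat.cast_sub h]
            push_cast
            ring
        set y : ℝ := (x / (l : ℝ)) ^ 2 with hydef
        have hy0 : 0 ≤ y := by positivity
        have hu2 : u ^ 2 = 1 - y := by
          rw [hudef, hydef, div_pow, mul_pow, hsq, div_pow, hx2, hmn]
          field_simp
          ring
        have hy1 : y ≤ 1 := by nlinarith [sq_nonneg u]
        -- Bernoulli
        have hBern : 1 + ((k - 1 : ℕ) : ℝ) * y ≤ (1 + y) ^ (k - 1) :=
          one_add_mul_le_pow (by linarith) (k - 1)
        have hmulpow : (1 - y) ^ (k - 1) * (1 + y) ^ (k - 1) ≤ 1 := by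
          rw [← mul_pow]
          apply pow_le_one₀ (by nlinarith) (by nlinarith)
        have hr2 : (u ^ (k - 1)) ^ 2 * (((k - 1 : ℕ) : ℝ) * y) ≤ 1 := by
          have h1 : (u ^ (k - 1)) ^ 2 = (1 - y) ^ (k - 1) := by
            rw [← pow_mul, mul_comm (k-1) 2, pow_mul, hu2]
          have h2 : (1 - y) ^ (k - 1) * (((k - 1 : ℕ) : ℝ) * y)
              ≤ (1 - y) ^ (k - 1) * (1 + y) ^ (k - 1) := by
            apply mul_le_mul_of_nonneg_left _ (pow_nonneg (by linarith) _)
            · linarith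
          rw [h1]
          exact h2.trans hmulpow
        have hkc : ((k - 1 : ℕ) : ℝ) = (k : ℝ) - 1 := by
          have : (1 : ℕ) ≤ k := by omega
          push_cast [Nat.cast_sub this]
          ring
        -- from the squared bound: u^(k-1) * (s * (x / l)) ≤ 1
        have hq : u ^ (k - 1) * (s * (x / l)) ≤ 1 := by
          have hlhs0 : 0 ≤ u ^ (k - 1) * (s * (x / l)) := by positivity
          have hsq2 : (u ^ (k - 1) * (s * (x / l))) ^ 2 ≤ 1 := by
            have : (u ^ (k - 1) * (s * (x / l))) ^ 2
                = (u ^ (k - 1)) ^ 2 * (((k - 1 : ℕ) : ℝ) * y) := by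
              rw [hkc, hydef, ← hs2]; ring
            rw [this]
            exact hr2
          nlinarith
        -- rearrange to A / x
        have hAx : A / x = (l : ℝ) / (s * x) := by
          rw [hAdef, div_div]
        rw [hAx, le_div_iff₀ (mul_pos hs0 hx0)]
        calc u ^ (k - 1) * (s * x) = (u ^ (k - 1) * (s * (x / l))) * l := by
              field_simp
          _ ≤ 1 * l := by
              apply mul_le_mul_of_nonneg_right hq hl0.le
          _ = (l : ℝ) := one_mul _
    -- assemble the pointwise bound
    have htm : |lam m| ≤ C1 * (l : ℝ) ^ (ε / 4) := by
      calc |lam m| ≤ ((m : ℕ).divisors.card : ℝ) := hlam m hm1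
        _ ≤ C1 * (m : ℝ) ^ (ε / 4) := htau m hm1
        _ ≤ C1 * (l : ℝ) ^ (ε / 4) := by
            apply mul_le_mul_of_nonneg_left _ (by linarith)
            exact Real.rpow_le_rpow hmR0 hmRl.le (by positivity)
    have htn : |lam (l - m)| ≤ C1 * (l : ℝ) ^ (ε / 4) := by
      calc |lam (l - m)| ≤ (((l - m : ℕ)).divisors.card : ℝ) := hlam _ hn1
        _ ≤ C1 * ((l - m : ℕ) : ℝ) ^ (ε / 4) := htau _ hn1
        _ ≤ C1 * (l : ℝ) ^ (ε / 4) := by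
            apply mul_le_mul_of_nonneg_left _ (by linarith)
            apply Real.rpow_le_rpow (Nat.cast_nonneg _) _ (by positivity)
            rw [hmn]; linarith
    have hrpowsum : (l : ℝ) ^ (ε / 4) * (l : ℝ) ^ (ε / 4) = (l : ℝ) ^ (ε / 2) := by
      rw [← Real.rpow_add hl0]; congr 1; ring
    calc |lam m * lam (l - m) * u ^ (k - 1)|
        = |lam m| * |lam (l - m)| * (u ^ (k - 1)) := by
          rw [abs_mul, abs_mul, abs_of_nonneg hr0]
      _ ≤ (C1 * (l : ℝ) ^ (ε / 4)) * (C1 * (l : ℝ) ^ (ε / 4)) * F (J m) := by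
          apply mul_le_mul _ hrF hr0 (by positivity)
          apply mul_le_mul htm htn (abs_nonneg _) (by positivity)
      _ = (C1 ^ 2 * (l : ℝ) ^ (ε / 2)) * F (J m) := by
          rw [← hrpowsum]; ring
  -- sum over the fibers of J
  have hsumF : ∑ m ∈ Finset.Ico 1 l, F (J m) ≤ 2 + 2 * A * (2 + Real.log l) := by
    have himg : (Finset.Ico 1 l).image J ⊆ Finset.range l := by
      intro j hj
      rw [Finset.mem_image] at hj
      obtain ⟨m, hm, rfl⟩ := hj
      rw [Finset.mem_Ico] at hm
      rw [Finset.mem_range]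
      simp only [hJdef]
      omega
    have hfib : ∀ j ∈ (Finset.Ico 1 l).image J,
        ({m ∈ Finset.Ico 1 l | J m = j}).card ≤ 2 := by
      intro j _
      have hsub : ({m ∈ Finset.Ico 1 l | J m = j}) ⊆ {(l - j)/2, (l + j)/2} := by
        intro m hm
        rw [Finset.mem_filter, Finset.mem_Ico] at hm
        simp only [hJdef] at hm
        simp only [Finset.mem_insert, Finset.mem_singleton]
        omega
      exact (Finset.card_le_card hsub).trans
        ((Finset.card_insert_le _ _).trans (by simp))
    have hrange1 : ∑ j ∈ Finset.range l, F j = F 0 + ∑ j ∈ Finset.Ico 1 l, F j := by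
      rw [Finset.range_eq_Ico, ← Finset.sum_Ico_consecutive _ (Nat.zero_le 1) (by omega : 1 ≤ l)]
      congr 1
      rw [← Finset.range_eq_Ico, Finset.sum_range_one]
    have hF0val : F 0 = 1 := by simp [hFdef]
    have hIco : ∑ j ∈ Finset.Ico 1 l, F j ≤ A + A * (1 + Real.log l) := by
      have hpt : ∀ j ∈ Finset.Ico 1 l, F j ≤ (if (j:ℝ) ≤ A then 1 else A / j) := by
        intro j hj
        rw [Finset.mem_Ico] at hj
        have hj0 : j ≠ 0 := by omega
        simp only [hFdef, if_neg hj0]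
        split_ifs with h
        · exact min_le_left _ _
        · exact min_le_right _ _
      have hcard : ((Finset.filter (fun j : ℕ => (j:ℝ) ≤ A) (Finset.Ico 1 l)).card : ℝ) ≤ A := by
        have hsub2 : (Finset.filter (fun j : ℕ => (j:ℝ) ≤ A) (Finset.Ico 1 l)) ⊆ Finset.Ico 1 (⌊A⌋₊ + 1) := by
          intro j hj
          rw [Finset.mem_filter, Finset.mem_Ico] at hj
          rw [Finset.mem_Ico]
          exact ⟨hj.1.1, by have := Nat.le_floor hj.2; omega⟩
        calc ((Finset.filter (fun j : ℕ => (j:ℝ) ≤ A) (Finset.Ico 1 l)).card : ℝ)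
            ≤ ((Finset.Ico 1 (⌊A⌋₊ + 1)).card : ℝ) := by
              exact_mod_cast Finset.card_le_card hsub2
          _ = (⌊A⌋₊ : ℝ) := by rw [Nat.card_Ico]; norm_num
          _ ≤ A := Nat.floor_le hA0
      have hharm : ∑ j ∈ Finset.Ico 1 l, A / (j : ℝ) ≤ A * (1 + Real.log l) := by
        have hIcoIcc : Finset.Ico 1 l = Finset.Icc 1 (l - 1) := by
          rw [← Finset.Ico_add_one_right_eq_Icc]
          congr 1
          omega
        have h1 : ∑ j ∈ Finset.Icc 1 (l-1), ((j:ℝ))⁻¹ ≤ 1 + Real.log (l-1 : ℕ) :=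
          sum_inv_le_one_add_log (l-1)
        have h2 : Real.log ((l-1 : ℕ) : ℝ) ≤ Real.log l := by
          apply Real.log_le_log (by exact_mod_cast (by omega : 0 < l - 1))
          exact_mod_cast Nat.sub_le l 1
        calc ∑ j ∈ Finset.Ico 1 l, A / (j : ℝ)
            = A * ∑ j ∈ Finset.Icc 1 (l-1), ((j:ℝ))⁻¹ := by
              rw [hIcoIcc, Finset.mul_sum]
              apply Finset.sum_congr rfl
              intro j _
              rw [div_eq_mul_inv]
          _ ≤ A * (1 + Real.log l) := by
              apply mul_le_mul_of_nonneg_left _ hA0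
              linarith
      calc ∑ j ∈ Finset.Ico 1 l, F j
          ≤ ∑ j ∈ Finset.Ico 1 l, (if (j:ℝ) ≤ A then 1 else A / j) :=
            Finset.sum_le_sum hpt
        _ = (∑ j ∈ Finset.filter (fun j : ℕ => (j:ℝ) ≤ A) (Finset.Ico 1 l), (1:ℝ))
            + ∑ j ∈ Finset.filter (fun j : ℕ => ¬((j:ℝ) ≤ A)) (Finset.Ico 1 l), A / j := Finset.sum_ite _ _
        _ ≤ A + A * (1 + Real.log l) := by
            apply add_le_add
            · rw [Finset.sum_const, nsmul_eq_mul, mul_one]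
              exact hcard
            · calc ∑ j ∈ Finset.filter (fun j : ℕ => ¬((j:ℝ) ≤ A)) (Finset.Ico 1 l), A / (j:ℝ)
                  ≤ ∑ j ∈ Finset.Ico 1 l, A / (j:ℝ) := by
                    apply Finset.sum_le_sum_of_subset_of_nonneg (Finset.filter_subset _ _)
                    intro j hj _
                    rw [Finset.mem_Ico] at hj
                    have : (0:ℝ) < j := by exact_mod_cast hj.1
                    positivity
                _ ≤ A * (1 + Real.log l) := hharm
    calc ∑ m ∈ Finset.Ico 1 l, F (J m)
        = ∑ j ∈ (Finset.Ico 1 l).image J, ({m ∈ Finset.Ico 1 l | J m = j}).card • F j :=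
          Finset.sum_comp F J
      _ ≤ ∑ j ∈ (Finset.Ico 1 l).image J, 2 * F j := by
          apply Finset.sum_le_sum
          intro j hj
          rw [nsmul_eq_mul]
          apply mul_le_mul_of_nonneg_right _ (hF0 j)
          exact_mod_cast hfib j hj
      _ ≤ ∑ j ∈ Finset.range l, 2 * F j := by
          apply Finset.sum_le_sum_of_subset_of_nonneg himg
          intro j _ _
          exact mul_nonneg (by norm_num) (hF0 j)
      _ = 2 * ∑ j ∈ Finset.range l, F j := by rw [Finset.mul_sum]
      _ ≤ 2 + 2 * A * (2 + Real.log l) := by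
          rw [hrange1, hF0val]
          have := hIco
          nlinarith [hIco]
  -- final assembly
  set Q : ℝ := (l : ℝ) / Real.sqrt k with hQdef
  have hsqk0 : 0 < Real.sqrt k := Real.sqrt_pos.mpr (by exact_mod_cast (by omega : 0 < k))
  have hQ0 : 0 ≤ Q := by positivity
  have hA2Q : A ≤ 2 * Q := by
    have h4 : Real.sqrt ((k:ℝ)) ≤ 2 * s := by
      have h5 : Real.sqrt ((k:ℝ)) ≤ Real.sqrt (4 * ((k:ℝ) - 1)) :=
        Real.sqrt_le_sqrt (by linarith)
      rwa [Real.sqrt_mul (by norm_num) _,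
        show Real.sqrt 4 = 2 by
          rw [show (4:ℝ) = 2^2 by norm_num, Real.sqrt_sq (by norm_num)]] at h5
    rw [hAdef, hQdef, div_le_iff₀ hs0]
    have heq : 2 * ((l:ℝ)/Real.sqrt k) * s = (l:ℝ) * (2 * s / Real.sqrt k) := by
      field_simp
    rw [heq]
    have h6 : 1 ≤ 2 * s / Real.sqrt k := by
      rw [le_div_iff₀ hsqk0]
      linarith
    exact le_mul_of_one_le_right hl0.le h6
  have hlog0 : 0 ≤ Real.log l := Real.log_nonneg hL1
  have hLge1 : 1 ≤ (l:ℝ) ^ (ε/2) := by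
    rw [show (1:ℝ) = (l:ℝ) ^ (0:ℝ) by rw [Real.rpow_zero]]
    exact Real.rpow_le_rpow_of_exponent_le hL1 (by positivity)
  have hL0 : 0 ≤ (l:ℝ) ^ (ε/2) := by positivity
  have hlogle : Real.log l ≤ (2/ε) * (l:ℝ) ^ (ε/2) := by
    have h1 : Real.log ((l:ℝ) ^ (ε/2)) = (ε/2) * Real.log l := Real.log_rpow hl0 _
    have h2 : Real.log ((l:ℝ) ^ (ε/2)) ≤ (l:ℝ) ^ (ε/2) :=
      Real.log_le_self (by positivity)
    rw [h1] at h2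
    calc Real.log l = (2/ε) * ((ε/2) * Real.log l) := by field_simp
      _ ≤ (2/ε) * ((l:ℝ) ^ (ε/2)) := by
          apply mul_le_mul_of_nonneg_left h2 (by positivity)
  have hA2 : 2 + 2 * A * (2 + Real.log l) ≤ (10 + 10/ε) * (l:ℝ) ^ (ε/2) * (1 + Q) := by
    have h1 : A * (2 + Real.log l) ≤ (2 * Q) * (2 + (2/ε) * (l:ℝ) ^ (ε/2)) := by
      apply mul_le_mul hA2Q (by linarith) (by linarith) (by linarith)
    have he : 0 < 1/ε := by positivity
    have h2 : 0 ≤ Q * ((l:ℝ) ^ (ε/2) - 1) := mul_nonneg hQ0 (by linarith)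
    have h3 : 0 ≤ (1/ε) * ((l:ℝ) ^ (ε/2)) := by positivity
    have h4 : 0 ≤ (1/ε) * (Q * ((l:ℝ) ^ (ε/2))) := by positivity
    have h5 : (2:ℝ)/ε = 2 * (1/ε) := by ring
    have h6 : (10:ℝ)/ε = 10 * (1/ε) := by ring
    rw [h5] at h1
    rw [h6]
    nlinarith [h1, h2, h3, h4, hLge1, hQ0]
  have habs : |∑ m ∈ Finset.Ico 1 l, lam m * lam (l - m) *
      (2 * Real.sqrt ((m : ℝ) * ((l - m : ℕ) : ℝ)) / (l : ℝ)) ^ (k - 1)|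
      ≤ (C1 ^ 2 * (l:ℝ) ^ (ε/2)) * ∑ m ∈ Finset.Ico 1 l, F (J m) := by
    calc |∑ m ∈ Finset.Ico 1 l, lam m * lam (l - m) *
        (2 * Real.sqrt ((m : ℝ) * ((l - m : ℕ) : ℝ)) / (l : ℝ)) ^ (k - 1)|
        ≤ ∑ m ∈ Finset.Ico 1 l, |lam m * lam (l - m) *
            (2 * Real.sqrt ((m : ℝ) * ((l - m : ℕ) : ℝ)) / (l : ℝ)) ^ (k - 1)| :=
          Finset.abs_sum_le_sum_abs _ _
      _ ≤ ∑ m ∈ Finset.Ico 1 l, (C1 ^ 2 * (l:ℝ) ^ (ε/2)) * F (J m) :=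
          Finset.sum_le_sum key
      _ = (C1 ^ 2 * (l:ℝ) ^ (ε/2)) * ∑ m ∈ Finset.Ico 1 l, F (J m) := by
          rw [Finset.mul_sum]
  have hCL0 : 0 ≤ C1 ^ 2 * (l:ℝ) ^ (ε/2) := by positivity
  calc |∑ m ∈ Finset.Ico 1 l, lam m * lam (l - m) *
      (2 * Real.sqrt ((m : ℝ) * ((l - m : ℕ) : ℝ)) / (l : ℝ)) ^ (k - 1)|
      ≤ (C1 ^ 2 * (l:ℝ) ^ (ε/2)) * ∑ m ∈ Finset.Ico 1 l, F (J m) := habs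
    _ ≤ (C1 ^ 2 * (l:ℝ) ^ (ε/2)) * (2 + 2 * A * (2 + Real.log l)) :=
        mul_le_mul_of_nonneg_left hsumF hCL0
    _ ≤ (C1 ^ 2 * (l:ℝ) ^ (ε/2)) * ((10 + 10/ε) * (l:ℝ) ^ (ε/2) * (1 + Q)) :=
        mul_le_mul_of_nonneg_left hA2 hCL0
    _ = (C1 ^ 2 * (10 + 10/ε)) * ((l:ℝ) ^ (ε/2) * (l:ℝ) ^ (ε/2)) * (1 + Q) := by ring
    _ = C1 ^ 2 * (10 + 10 / ε) * (l:ℝ) ^ ε * (1 + Q) := by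
        rw [← Real.rpow_add hl0]
        congr 3
        ring
end

section
/- For every ε > 0 there is a constant C = C(ε) such that the following holds. Let k ≥ 2 and l ≥ 2 be integers, and let λ : ℕ → ℝ satisfy |λ(n)| ≤ τ(n) for all n ≥ 1. Then | Σ_{m=1}^{l−1} λ(m)·λ(l−m)·[ ( 2√(m(l−m)) / l )^{k−1} − exp( −(2m−l)²·k / (2l²) ) ] | ≤ C · l^{1+ε} · k^{−3/2}. In other words, T(l) = S(l) + O(l^{1+ε} k^{−3/2}), where T(l) = Σ_{m+n=l} λ(m)λ(n)(2√(mn)/(m+n))^{k−1} and S(l) = Σ_{m+n=l} λ(m)λ(n)·exp(−(m−n)²k/(2l²)). -/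
open Real Finset
set_option maxHeartbeats 1000000


lemma tau_le_rpow (δ : ℝ) (hδ : 0 < δ) :
    ∃ D : ℝ, 1 ≤ D ∧ ∀ n : ℕ, 1 ≤ n → (n.divisors.card : ℝ) ≤ D * (n : ℝ) ^ δ := by
  set M : ℝ := max 1 (1 / (δ * Real.log 2)) with hM
  have hM1 : 1 ≤ M := le_max_left _ _
  have hlog2 : 0 < Real.log 2 := Real.log_pos (by norm_num)
  set P : ℕ := ⌈(2 : ℝ) ^ (1 / δ)⌉₊ with hP
  refine ⟨M ^ (P + 1), one_le_pow₀ hM1, ?_⟩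
  intro n hn
  have hn0 : n ≠ 0 := by omega
  -- key per-prime bound
  have key : ∀ p ∈ n.primeFactors,
      ((n.factorization p + 1 : ℕ) : ℝ) ≤
        (if p ≤ P then M else 1) * (p : ℝ) ^ ((n.factorization p : ℝ) * δ) := by
    intro p hp
    have hpp : p.Prime := Nat.prime_of_mem_primeFactors hp
    have hp2 : (2 : ℝ) ≤ (p : ℝ) := by exact_mod_cast hpp.two_le
    set a : ℕ := n.factorization p
    by_cases hle : p ≤ P
    · simp only [if_pos hle]
      have h2 : (2 : ℝ) ^ ((a : ℝ) * δ) ≤ (p : ℝ) ^ ((a : ℝ) * δ) :=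
        Real.rpow_le_rpow (by norm_num) hp2 (by positivity)
      have h3 : ((a : ℝ) + 1) ≤ M * (2 : ℝ) ^ ((a : ℝ) * δ) := by
        have he : (1 : ℝ) + (a : ℝ) * δ * Real.log 2 ≤ (2 : ℝ) ^ ((a : ℝ) * δ) := by
          rw [Real.rpow_def_of_pos (by norm_num)]
          have := Real.add_one_le_exp (Real.log 2 * ((a : ℝ) * δ))
          linarith [this]
        have hMd : 1 / (δ * Real.log 2) ≤ M := le_max_right _ _
        have hMd' : 1 ≤ M * (δ * Real.log 2) := by
          rw [div_le_iff₀ (by positivity)] at hMd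
          linarith
        have ha0 : (0 : ℝ) ≤ (a : ℝ) := by positivity
        calc ((a : ℝ) + 1) ≤ M * (1 + (a : ℝ) * δ * Real.log 2) := by
              have : (a : ℝ) * 1 ≤ (a : ℝ) * (M * (δ * Real.log 2)) :=
                mul_le_mul_of_nonneg_left hMd' ha0
              nlinarith
          _ ≤ M * (2 : ℝ) ^ ((a : ℝ) * δ) := by
              apply mul_le_mul_of_nonneg_left he (by linarith)
      calc ((a + 1 : ℕ) : ℝ) = (a : ℝ) + 1 := by push_cast; ring
        _ ≤ M * (2 : ℝ) ^ ((a : ℝ) * δ) := h3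
        _ ≤ M * (p : ℝ) ^ ((a : ℝ) * δ) := by
            apply mul_le_mul_of_nonneg_left h2 (by linarith)
    · simp only [if_neg hle, one_mul]
      -- p > P ≥ 2^{1/δ}, so p^δ ≥ 2
      have hPp : (2 : ℝ) ^ (1 / δ) ≤ (p : ℝ) := by
        have : (2 : ℝ) ^ (1 / δ) ≤ (P : ℝ) := Nat.le_ceil _
        have hlt : P < p := by omega
        have : (P : ℝ) ≤ (p : ℝ) := by exact_mod_cast hlt.le
        linarith [Nat.le_ceil ((2:ℝ) ^ (1/δ))]
      have hpd : (2 : ℝ) ≤ (p : ℝ) ^ δ := by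
        have h1 : ((2 : ℝ) ^ (1 / δ)) ^ δ ≤ (p : ℝ) ^ δ :=
          Real.rpow_le_rpow (by positivity) hPp hδ.le
        rwa [← Real.rpow_mul (by norm_num : (0:ℝ) ≤ 2), one_div_mul_cancel hδ.ne',
          Real.rpow_one] at h1
      have h2a : ((a + 1 : ℕ) : ℝ) ≤ (2 : ℝ) ^ a := by
        have := Nat.lt_two_pow_self (n := a)
        exact_mod_cast Nat.succ_le_of_lt this
      calc ((a + 1 : ℕ) : ℝ) ≤ (2 : ℝ) ^ a := h2a
        _ ≤ ((p : ℝ) ^ δ) ^ a := pow_le_pow_left₀ (by norm_num) hpd a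
        _ = (p : ℝ) ^ ((a : ℝ) * δ) := by
            rw [← Real.rpow_natCast ((p:ℝ) ^ δ) a, ← Real.rpow_mul (by positivity), mul_comm]
  -- now combine
  have hcard : (n.divisors.card : ℝ) = ∏ p ∈ n.primeFactors, ((n.factorization p + 1 : ℕ) : ℝ) := by
    rw [Nat.card_divisors hn0]; push_cast; ring
  have hprod : ∏ p ∈ n.primeFactors, (p : ℝ) ^ ((n.factorization p : ℝ) * δ) = (n : ℝ) ^ δ := by
    have h1 : ∀ p ∈ n.primeFactors, (p : ℝ) ^ ((n.factorization p : ℝ) * δ)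
        = (((p ^ n.factorization p : ℕ) : ℝ)) ^ δ := by
      intro p hp
      have hp0 : (0 : ℝ) ≤ (p : ℝ) := by positivity
      rw [show (((p ^ n.factorization p : ℕ)) : ℝ) = (p:ℝ) ^ (n.factorization p) by push_cast; ring,
        ← Real.rpow_natCast (p:ℝ) (n.factorization p), ← Real.rpow_mul hp0]
    rw [Finset.prod_congr rfl h1, Real.finset_prod_rpow _ _ (fun i _ => by positivity)]
    congr 1
    rw [← Nat.cast_prod]
    congr 1
    rw [← Nat.support_factorization]
    exact Nat.factorization_prod_pow_eq_self hn0

  have step : (n.divisors.card : ℝ) ≤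
      (∏ p ∈ n.primeFactors, (if p ≤ P then M else 1)) *
        ∏ p ∈ n.primeFactors, (p : ℝ) ^ ((n.factorization p : ℝ) * δ) := by
    rw [hcard, ← Finset.prod_mul_distrib]
    apply Finset.prod_le_prod (fun i _ => by positivity) key
  have hw : (∏ p ∈ n.primeFactors, (if p ≤ P then M else 1)) ≤ M ^ (P + 1) := by
    have he : ∏ p ∈ n.primeFactors, (if p ≤ P then M else 1)
        = M ^ (n.primeFactors.filter (· ≤ P)).card := by
      rw [Finset.prod_ite, Finset.prod_const, Finset.prod_const, one_pow, mul_one]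
    rw [he]
    apply pow_le_pow_right₀ hM1
    have hsub : n.primeFactors.filter (· ≤ P) ⊆ Finset.range (P + 1) := by
      intro q hq
      simp only [Finset.mem_filter] at hq
      simp [Finset.mem_range]
      omega
    calc (n.primeFactors.filter (· ≤ P)).card ≤ (Finset.range (P+1)).card :=
          Finset.card_le_card hsub
      _ = P + 1 := Finset.card_range _
  calc (n.divisors.card : ℝ) ≤ _ := step
    _ ≤ M ^ (P + 1) * (n : ℝ) ^ δ := by
        rw [hprod]
        apply mul_le_mul_of_nonneg_right hw (by positivity)



lemma exp_le_inv_one_sub {x : ℝ} (hx : x < 1) : Real.exp x ≤ 1 / (1 - x) := by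
  have h1 : 1 - x ≤ Real.exp (-x) := by linarith [Real.add_one_le_exp (-x)]
  have h2 : Real.exp (-x) = (Real.exp x)⁻¹ := Real.exp_neg x
  rw [h2] at h1
  rw [le_div_iff₀ (by linarith)]
  have hp := Real.exp_pos x
  calc Real.exp x * (1 - x) ≤ Real.exp x * (Real.exp x)⁻¹ :=
        mul_le_mul_of_nonneg_left h1 hp.le
    _ = 1 := mul_inv_cancel₀ hp.ne'

lemma pointwise_t (k : ℕ) (hk : 2 ≤ k) (t : ℝ) (ht0 : 0 ≤ t) (ht1 : t ≤ 1) :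
    |Real.sqrt (1 - t) ^ (k - 1) - Real.exp (-((k : ℝ) * t) / 2)| ≤
      3 * (t + (k : ℝ) * t ^ 2) * Real.exp (-((k : ℝ) * t) / 2) := by
  have hk1 : (1 : ℝ) ≤ (k : ℝ) - 1 := by
    have : (2 : ℝ) ≤ (k : ℝ) := by exact_mod_cast hk
    linarith
  have hkc : ((k - 1 : ℕ) : ℝ) = (k : ℝ) - 1 := by
    have : 1 ≤ k := by omega
    push_cast [Nat.cast_sub this]
    ring
  have hB : (0 : ℝ) < Real.exp (-((k : ℝ) * t) / 2) := Real.exp_pos _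
  set B := Real.exp (-((k : ℝ) * t) / 2) with hBdef
  have hpos : (0:ℝ) ≤ t + (k : ℝ) * t ^ 2 := by positivity
  by_cases hhalf : t ≤ 1 / 2
  · -- t small: Taylor
    have h1t : (0 : ℝ) < 1 - t := by linarith
    have hA : Real.sqrt (1 - t) ^ (k - 1) =
        Real.exp (((k : ℝ) - 1) * (Real.log (1 - t) / 2)) := by
      rw [← Real.exp_log (Real.sqrt_pos.2 h1t), Real.log_sqrt h1t.le,
        ← Real.exp_nat_mul, hkc]
    set a := ((k : ℝ) - 1) * (Real.log (1 - t) / 2) with hadef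
    have hlogU : Real.log (1 - t) ≤ -t := by
      have := Real.log_le_sub_one_of_pos h1t
      linarith
    have hlogL : -(t + 2 * t ^ 2) ≤ Real.log (1 - t) := by
      rw [Real.le_log_iff_exp_le h1t]
      have hs : (1 : ℝ) + (t + 2 * t ^ 2) ≤ Real.exp (t + 2 * t ^ 2) := by
        linarith [Real.add_one_le_exp (t + 2 * t ^ 2)]
      have hexp : Real.exp (-(t + 2 * t ^ 2)) = (Real.exp (t + 2 * t ^ 2))⁻¹ :=
        Real.exp_neg _
      rw [hexp]
      rw [inv_le_iff_one_le_mul₀ (Real.exp_pos _)]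
      nlinarith [hs, hhalf, ht0]
    have hub : a - -(((k : ℝ) * t) / 2) ≤ t / 2 := by
      have h := mul_le_mul_of_nonneg_left hlogU (by linarith : (0:ℝ) ≤ ((k:ℝ)-1)/2)
      simp only [hadef]
      nlinarith
    have hlb : -(t / 2) - (k : ℝ) * t ^ 2 ≤ a - -(((k : ℝ) * t) / 2) := by
      have h := mul_le_mul_of_nonneg_left hlogL (by linarith : (0:ℝ) ≤ ((k:ℝ)-1)/2)
      simp only [hadef]
      nlinarith
    have habs : |a - -(((k : ℝ) * t) / 2)| ≤ t + (k : ℝ) * t ^ 2 := by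
      rw [abs_le]
      constructor <;> nlinarith
    rw [hA]
    have hsplit : Real.exp a = B * Real.exp (a - -(((k : ℝ) * t) / 2)) := by
      rw [hBdef, ← Real.exp_add]
      ring_nf
    by_cases hone : |a - -(((k : ℝ) * t) / 2)| ≤ 1
    · have h2 := Real.abs_exp_sub_one_le hone
      calc |Real.exp a - B| = B * |Real.exp (a - -(((k : ℝ) * t) / 2)) - 1| := by
            rw [hsplit, show B * Real.exp (a - -(((k : ℝ) * t) / 2)) - B
              = B * (Real.exp (a - -(((k : ℝ) * t) / 2)) - 1) by ring, abs_mul, abs_of_pos hB]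
        _ ≤ B * (2 * |a - -(((k : ℝ) * t) / 2)|) := by
            apply mul_le_mul_of_nonneg_left h2 hB.le
        _ ≤ B * (2 * (t + (k : ℝ) * t ^ 2)) :=
            mul_le_mul_of_nonneg_left (by linarith) hB.le
        _ ≤ 3 * (t + (k : ℝ) * t ^ 2) * B := by nlinarith [hpos, hB.le]
    · push_neg at hone
      have hge1 : (1 : ℝ) ≤ t + (k : ℝ) * t ^ 2 := le_trans hone.le habs
      have hea : Real.exp a ≤ (4 / 3) * B := by
        have h3 : a ≤ -(((k : ℝ) * t) / 2) + 1 / 4 := by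
          have := hub; linarith [hhalf]
        calc Real.exp a ≤ Real.exp (-(((k : ℝ) * t) / 2) + 1 / 4) := Real.exp_le_exp.2 h3
          _ = B * Real.exp (1 / 4) := by rw [hBdef, ← Real.exp_add]; congr 1; ring
          _ ≤ B * (4 / 3) := by
              apply mul_le_mul_of_nonneg_left _ hB.le
              calc Real.exp (1/4 : ℝ) ≤ 1 / (1 - 1/4) := exp_le_inv_one_sub (by norm_num)
                _ = 4 / 3 := by norm_num
          _ = (4 / 3) * B := by ring
      calc |Real.exp a - B| ≤ |Real.exp a| + |B| := abs_sub _ _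
        _ = Real.exp a + B := by rw [abs_of_pos (Real.exp_pos _), abs_of_pos hB]
        _ ≤ (4 / 3) * B + B := by linarith
        _ ≤ 3 * (t + (k : ℝ) * t ^ 2) * B := by nlinarith [hge1, hB.le]
  · -- t large: both terms tiny
    push_neg at hhalf
    have hs1 : Real.sqrt (1 - t) ≤ Real.exp (-t / 2) := by
      have h1 : 1 - t ≤ Real.exp (-t) := by linarith [Real.add_one_le_exp (-t)]
      have h2 : Real.exp (-t) = Real.exp (-t / 2) ^ 2 := by
        rw [← Real.exp_nat_mul]
        congr 1
        push_cast
        ring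
      calc Real.sqrt (1 - t) ≤ Real.sqrt (Real.exp (-t)) := Real.sqrt_le_sqrt h1
        _ = Real.exp (-t / 2) := by rw [h2, Real.sqrt_sq (Real.exp_pos _).le]
    have hA : Real.sqrt (1 - t) ^ (k - 1) ≤ 2 * B := by
      calc Real.sqrt (1 - t) ^ (k - 1) ≤ Real.exp (-t / 2) ^ (k - 1) :=
            pow_le_pow_left₀ (Real.sqrt_nonneg _) hs1 _
        _ = Real.exp (((k : ℝ) - 1) * (-t / 2)) := by rw [← Real.exp_nat_mul, hkc]
        _ = B * Real.exp (t / 2) := by rw [hBdef, ← Real.exp_add]; ring_nf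
        _ ≤ B * 2 := by
            apply mul_le_mul_of_nonneg_left _ hB.le
            calc Real.exp (t / 2) ≤ Real.exp (1 / 2) :=
                  Real.exp_le_exp.2 (by linarith)
              _ ≤ 1 / (1 - 1/2) := exp_le_inv_one_sub (by norm_num)
              _ = 2 := by norm_num
        _ = 2 * B := by ring
    have hge1 : (1 : ℝ) ≤ t + (k : ℝ) * t ^ 2 := by
      have hk2 : (2 : ℝ) ≤ (k : ℝ) := by exact_mod_cast hk
      have h1 : (2:ℝ) * t ^ 2 ≤ (k:ℝ) * t ^ 2 :=
        mul_le_mul_of_nonneg_right hk2 (sq_nonneg t)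
      have h2 : t - 1/4 ≤ t ^ 2 := by nlinarith [sq_nonneg (t - 1/2)]
      linarith
    have hApos : (0 : ℝ) ≤ Real.sqrt (1 - t) ^ (k - 1) := pow_nonneg (Real.sqrt_nonneg _) _
    calc |Real.sqrt (1 - t) ^ (k - 1) - B| ≤ |Real.sqrt (1 - t) ^ (k - 1)| + |B| := abs_sub _ _
      _ = Real.sqrt (1 - t) ^ (k - 1) + B := by rw [abs_of_nonneg hApos, abs_of_pos hB]
      _ ≤ 2 * B + B := by linarith
      _ ≤ 3 * (t + (k : ℝ) * t ^ 2) * B := by nlinarith [hge1, hB.le]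

lemma decay_t (k : ℕ) (hk : 2 ≤ k) (t : ℝ) (ht0 : 0 ≤ t) :
    3 * (t + (k : ℝ) * t ^ 2) * Real.exp (-((k : ℝ) * t) / 2) ≤
      (36864 / (k : ℝ)) * Real.exp (-((k : ℝ) * t) / 4) := by
  have hk0 : (0 : ℝ) < (k : ℝ) := by positivity
  have hu0 : (0 : ℝ) ≤ (k : ℝ) * t := by positivity
  have hquart : 1 + ((k : ℝ) * t) ^ 4 / 6144 ≤ Real.exp ((k : ℝ) * t / 4) := by
    have h := Real.sum_le_exp_of_nonneg (x := (k : ℝ) * t / 4) (by positivity) 5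
    simp [Finset.sum_range_succ, Nat.factorial] at h
    nlinarith [pow_nonneg (by positivity : (0:ℝ) ≤ (k:ℝ)*t/4) 1,
      pow_nonneg (by positivity : (0:ℝ) ≤ (k:ℝ)*t/4) 2,
      pow_nonneg (by positivity : (0:ℝ) ≤ (k:ℝ)*t/4) 3]
  have main : 3 * ((k : ℝ) * t + ((k : ℝ) * t) ^ 2) ≤ 36864 * Real.exp ((k : ℝ) * t / 4) := by
    nlinarith [sq_nonneg ((k:ℝ)*t - 1), sq_nonneg (((k:ℝ)*t)^2 - 1), sq_nonneg ((k:ℝ)*t)]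
  have h2 : 3 * (t + (k : ℝ) * t ^ 2) * Real.exp (-((k : ℝ) * t) / 2) * (k : ℝ) ≤
      36864 * Real.exp (-((k : ℝ) * t) / 4) := by
    have hm := mul_le_mul_of_nonneg_right main (Real.exp_pos (-((k : ℝ) * t) / 2)).le
    have he : Real.exp ((k : ℝ) * t / 4) * Real.exp (-((k : ℝ) * t) / 2) =
        Real.exp (-((k : ℝ) * t) / 4) := by rw [← Real.exp_add]; ring_nf
    calc 3 * (t + (k : ℝ) * t ^ 2) * Real.exp (-((k : ℝ) * t) / 2) * (k : ℝ)
        = 3 * ((k : ℝ) * t + ((k : ℝ) * t) ^ 2) * Real.exp (-((k : ℝ) * t) / 2) := by ring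
      _ ≤ 36864 * Real.exp ((k : ℝ) * t / 4) * Real.exp (-((k : ℝ) * t) / 2) := hm
      _ = 36864 * Real.exp (-((k : ℝ) * t) / 4) := by rw [mul_assoc, he]
  rw [div_mul_eq_mul_div, le_div_iff₀ hk0]
  linarith [h2]


lemma gauss_sum (c : ℝ) (hc : 0 < c) (N : ℕ) :
    ∑ i ∈ Finset.range N, Real.exp (-c * ((i + 1 : ℕ) : ℝ) ^ 2) ≤
      Real.sqrt π / Real.sqrt c := by
  have hanti : AntitoneOn (fun x : ℝ => Real.exp (-c * x ^ 2)) (Set.Icc (0:ℝ) (0 + N)) := by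
    intro x hx y hy hxy
    simp only
    apply Real.exp_le_exp.2
    have h1 : x ^ 2 ≤ y ^ 2 := by nlinarith [hx.1]
    nlinarith
  have h1 := hanti.sum_le_integral
  simp only [zero_add] at h1
  have h2 : (∫ x in (0:ℝ)..(N:ℝ), Real.exp (-c * x ^ 2)) ≤
      ∫ x : ℝ, Real.exp (-c * x ^ 2) := by
    rw [intervalIntegral.integral_of_le (by positivity)]
    apply MeasureTheory.setIntegral_le_integral (integrable_exp_neg_mul_sq hc)
    filter_upwards with x using (Real.exp_pos _).le
  have h3 : (∫ x : ℝ, Real.exp (-c * x ^ 2)) = Real.sqrt (π / c) := integral_gaussian c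
  have h4 : Real.sqrt (π / c) = Real.sqrt π / Real.sqrt c := Real.sqrt_div pi_pos.le c
  linarith [h1, h2]

lemma sum_fiber (c : ℝ) (hc : 0 < c) (l : ℕ) :
    ∑ m ∈ (Finset.Ico 1 l).filter (fun m => 2 * m ≠ l),
      Real.exp (-c * ((((2 * m : ℤ) - l).natAbs : ℝ)) ^ 2) ≤
      2 * (Real.sqrt π / Real.sqrt c) := by
  set φ : ℕ → ℕ := fun m => (2 * (m : ℤ) - l).natAbs with hφ
  set S := (Finset.Ico 1 l).filter (fun m => 2 * m ≠ l) with hS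
  have hcomp := Finset.sum_comp (s := S) (f := fun v : ℕ => Real.exp (-c * (v : ℝ) ^ 2))
    (g := φ)
  rw [hcomp]
  have himg : (S.image φ) ⊆ Finset.Icc 1 l := by
    intro v hv
    simp only [hS, hφ, Finset.mem_image, Finset.mem_filter, Finset.mem_Ico] at hv
    obtain ⟨m, ⟨⟨hm1, hm2⟩, hm3⟩, rfl⟩ := hv
    simp only [Finset.mem_Icc]
    omega
  have hcard : ∀ v ∈ (S.image φ),
      ((S.filter fun m => φ m = v).card : ℝ) ≤ 2 := by
    intro v _
    have hsub : (S.filter fun m => φ m = v) ⊆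
        {(l + v) / 2, (l - v) / 2} := by
      intro m hm
      simp only [hS, hφ, Finset.mem_filter, Finset.mem_Ico] at hm
      simp only [Finset.mem_insert, Finset.mem_singleton]
      omega
    have h2 : (S.filter fun m => φ m = v).card ≤ 2 := by
      refine (Finset.card_le_card hsub).trans ?_
      refine (Finset.card_insert_le _ _).trans ?_
      simp
    exact_mod_cast h2
  calc ∑ v ∈ (S.image φ),
        (S.filter fun m => φ m = v).card • Real.exp (-c * (v : ℝ) ^ 2)
      ≤ ∑ v ∈ (S.image φ),
        2 * Real.exp (-c * (v : ℝ) ^ 2) := by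
        apply Finset.sum_le_sum
        intro v hv
        rw [nsmul_eq_mul]
        exact mul_le_mul_of_nonneg_right (hcard v hv) (Real.exp_pos _).le
    _ ≤ ∑ v ∈ Finset.Icc 1 l, 2 * Real.exp (-c * (v : ℝ) ^ 2) :=
        Finset.sum_le_sum_of_subset_of_nonneg himg (fun v _ _ => by positivity)
    _ = 2 * ∑ v ∈ Finset.Icc 1 l, Real.exp (-c * (v : ℝ) ^ 2) := by rw [Finset.mul_sum]
    _ ≤ 2 * (Real.sqrt π / Real.sqrt c) := by
        apply mul_le_mul_of_nonneg_left _ (by norm_num : (0:ℝ) ≤ 2)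
        have heq : ∑ v ∈ Finset.Icc 1 l, Real.exp (-c * (v : ℝ) ^ 2)
            = ∑ i ∈ Finset.range l, Real.exp (-c * ((i + 1 : ℕ) : ℝ) ^ 2) := by
          rw [show Finset.Icc 1 l = Finset.Ico 1 (l + 1) by rfl,
            Finset.sum_Ico_eq_sum_range]
          simp only [Nat.add_sub_cancel]
          apply Finset.sum_congr rfl
          intro i _
          congr 2
          push_cast
          ring
        rw [heq]
        exact gauss_sum c hc l


/-- Gaussian approximation to the shifted convolution weight:
`T(l) = S(l) + O(l^{1+ε} k^{-3/2})`, where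
`T(l) = ∑_{m+n=l} λ(m)λ(n)(2√(mn)/(m+n))^{k-1}` and
`S(l) = ∑_{m+n=l} λ(m)λ(n) exp(-(m-n)²k/(2l²))`, under `|λ(n)| ≤ τ(n)`. -/
theorem shifted_convolution_gaussian_approx (ε : ℝ) (hε : 0 < ε) :
    ∃ C : ℝ, ∀ k l : ℕ, 2 ≤ k → 2 ≤ l → ∀ lam : ℕ → ℝ,
      (∀ n : ℕ, 1 ≤ n → |lam n| ≤ (n.divisors.card : ℝ)) →
      |∑ m ∈ Finset.Ico 1 l, lam m * lam (l - m) *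
          ((2 * Real.sqrt ((m : ℝ) * ((l - m : ℕ) : ℝ)) / (l : ℝ)) ^ (k - 1) -
            Real.exp (-((2 * (m : ℝ) - (l : ℝ)) ^ 2 * (k : ℝ)) / (2 * (l : ℝ) ^ 2)))| ≤
        C * (l : ℝ) ^ (1 + ε) * (k : ℝ) ^ (-(3 : ℝ) / 2) := by
  obtain ⟨D, hD1, hD⟩ := tau_le_rpow (ε / 2) (half_pos hε)
  refine ⟨147456 * Real.sqrt π * D ^ 2, ?_⟩
  intro k l hk hl lam hlam
  have hlnat : 0 < l := by omega
  have hl0 : (0 : ℝ) < l := by exact_mod_cast hlnat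
  have hknat : 0 < k := by omega
  have hk0 : (0 : ℝ) < k := by exact_mod_cast hknat
  set c : ℝ := (k : ℝ) / (4 * (l : ℝ) ^ 2) with hcdef
  have hc0 : 0 < c := by positivity
  set F : ℕ → ℝ := fun m => lam m * lam (l - m) *
      ((2 * Real.sqrt ((m : ℝ) * ((l - m : ℕ) : ℝ)) / (l : ℝ)) ^ (k - 1) -
        Real.exp (-((2 * (m : ℝ) - (l : ℝ)) ^ 2 * (k : ℝ)) / (2 * (l : ℝ) ^ 2))) with hF
  set φ : ℕ → ℕ := fun m => (2 * (m : ℤ) - l).natAbs with hφ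
  -- terms with 2m = l vanish
  have hne : ∀ m ∈ Finset.Ico 1 l, F m ≠ 0 → 2 * m ≠ l := by
    intro m hm hFm h2m
    apply hFm
    simp only [Finset.mem_Ico] at hm
    have hml : l - m = m := by omega
    have hlm : (l : ℝ) = 2 * m := by exact_mod_cast h2m.symm
    have hb : 2 * Real.sqrt ((m : ℝ) * ((l - m : ℕ) : ℝ)) / (l : ℝ) = 1 := by
      rw [hml, Real.sqrt_mul_self (by positivity : (0:ℝ) ≤ (m:ℝ)), hlm]
      have : (0:ℝ) < (m:ℝ) := by exact_mod_cast (by omega : 0 < m)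
      field_simp
    have he : -((2 * (m : ℝ) - (l : ℝ)) ^ 2 * (k : ℝ)) / (2 * (l : ℝ) ^ 2) = 0 := by
      rw [hlm]; ring
    simp only [hF, hb, he, one_pow, Real.exp_zero, sub_self, mul_zero]
  rw [← Finset.sum_filter_of_ne hne]
  set S := (Finset.Ico 1 l).filter (fun m => 2 * m ≠ l) with hS
  -- per-term bound
  have hterm : ∀ m ∈ S, |F m| ≤
      D ^ 2 * (l : ℝ) ^ ε * ((36864 / (k : ℝ)) * Real.exp (-c * ((φ m : ℕ) : ℝ) ^ 2)) := by
    intro m hm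
    simp only [hS, Finset.mem_filter, Finset.mem_Ico] at hm
    obtain ⟨⟨hm1, hm2⟩, hm3⟩ := hm
    have hm1' : (1 : ℝ) ≤ (m : ℝ) := by exact_mod_cast hm1
    have hm2' : (m : ℝ) ≤ (l : ℝ) - 1 := by
      have : m ≤ l - 1 := by omega
      have h := (Nat.cast_le (α := ℝ)).2 this
      rw [Nat.cast_sub (by omega)] at h
      simpa using h
    have hcast : ((l - m : ℕ) : ℝ) = (l : ℝ) - (m : ℝ) := by
      rw [Nat.cast_sub (by omega)]
    set t : ℝ := ((2 * (m : ℝ) - l) / l) ^ 2 with htdef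
    have ht0 : 0 ≤ t := sq_nonneg _
    have htl : t = (2 * (m : ℝ) - l) ^ 2 / (l : ℝ) ^ 2 := by
      rw [htdef, div_pow]
    have ht1 : t ≤ 1 := by
      rw [htl, div_le_one (by positivity)]
      nlinarith [hm1', hm2']
    have eq1 : 2 * Real.sqrt ((m : ℝ) * ((l - m : ℕ) : ℝ)) / (l : ℝ) =
        Real.sqrt (1 - t) := by
      rw [hcast]
      have h4 : 1 - t = ((m : ℝ) * ((l : ℝ) - m)) * (2 / l) ^ 2 := by
        rw [htl]; field_simp; ring
      rw [h4, Real.sqrt_mul (by nlinarith : (0:ℝ) ≤ (m : ℝ) * ((l : ℝ) - m)),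
        Real.sqrt_sq (by positivity : (0:ℝ) ≤ 2 / (l:ℝ))]
      ring
    have eq2 : -((2 * (m : ℝ) - (l : ℝ)) ^ 2 * (k : ℝ)) / (2 * (l : ℝ) ^ 2) =
        -((k : ℝ) * t) / 2 := by
      rw [htl]; field_simp
    have hdiff : |(2 * Real.sqrt ((m : ℝ) * ((l - m : ℕ) : ℝ)) / (l : ℝ)) ^ (k - 1) -
        Real.exp (-((2 * (m : ℝ) - (l : ℝ)) ^ 2 * (k : ℝ)) / (2 * (l : ℝ) ^ 2))| ≤
        (36864 / (k : ℝ)) * Real.exp (-((k : ℝ) * t) / 4) := by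
      rw [eq1, eq2]
      exact le_trans (pointwise_t k hk t ht0 ht1) (decay_t k hk t ht0)
    have hp2 : (((φ m : ℕ)) : ℝ) ^ 2 = (2 * (m : ℝ) - l) ^ 2 := by
      have h := Nat.cast_natAbs (α := ℝ) (n := 2 * (m : ℤ) - l)
      simp only [hφ]
      rw [h, Int.cast_abs, sq_abs]
      push_cast
      ring
    have eq3 : -((k : ℝ) * t) / 4 = -c * ((φ m : ℕ) : ℝ) ^ 2 := by
      rw [hp2, htl, hcdef]; ring
    rw [eq3] at hdiff
    have h1 : |lam m| ≤ D * (l : ℝ) ^ (ε / 2) := by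
      refine (hlam m hm1).trans ((hD m hm1).trans ?_)
      apply mul_le_mul_of_nonneg_left _ (by linarith : (0:ℝ) ≤ D)
      exact Real.rpow_le_rpow (by positivity) (by exact_mod_cast hm2.le) (by linarith)
    have h2 : |lam (l - m)| ≤ D * (l : ℝ) ^ (ε / 2) := by
      have hlm1 : 1 ≤ l - m := by omega
      refine (hlam (l - m) hlm1).trans ((hD (l - m) hlm1).trans ?_)
      apply mul_le_mul_of_nonneg_left _ (by linarith : (0:ℝ) ≤ D)
      apply Real.rpow_le_rpow (by positivity) _ (by linarith)
      exact_mod_cast (by omega : l - m ≤ l)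
    have hDl0 : (0 : ℝ) ≤ D * (l : ℝ) ^ (ε / 2) := by positivity
    calc |F m| = |lam m| * |lam (l - m)| *
          |(2 * Real.sqrt ((m : ℝ) * ((l - m : ℕ) : ℝ)) / (l : ℝ)) ^ (k - 1) -
            Real.exp (-((2 * (m : ℝ) - (l : ℝ)) ^ 2 * (k : ℝ)) / (2 * (l : ℝ) ^ 2))| := by
          rw [hF]; rw [abs_mul, abs_mul]
      _ ≤ (D * (l : ℝ) ^ (ε / 2)) * (D * (l : ℝ) ^ (ε / 2)) *
            ((36864 / (k : ℝ)) * Real.exp (-c * ((φ m : ℕ) : ℝ) ^ 2)) := by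
          apply mul_le_mul (mul_le_mul h1 h2 (abs_nonneg _) hDl0) hdiff (abs_nonneg _)
          positivity
      _ = D ^ 2 * (l : ℝ) ^ ε * ((36864 / (k : ℝ)) * Real.exp (-c * ((φ m : ℕ) : ℝ) ^ 2)) := by
          have hrr : (l : ℝ) ^ (ε / 2) * (l : ℝ) ^ (ε / 2) = (l : ℝ) ^ ε := by
            rw [← Real.rpow_add hl0]; norm_num
          calc (D * (l : ℝ) ^ (ε / 2)) * (D * (l : ℝ) ^ (ε / 2)) *
              ((36864 / (k : ℝ)) * Real.exp (-c * ((φ m : ℕ) : ℝ) ^ 2))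
              = D ^ 2 * ((l : ℝ) ^ (ε / 2) * (l : ℝ) ^ (ε / 2)) *
                ((36864 / (k : ℝ)) * Real.exp (-c * ((φ m : ℕ) : ℝ) ^ 2)) := by ring
            _ = _ := by rw [hrr]
  -- sum up
  have hsum := sum_fiber c hc0 l
  have hQ0 : (0 : ℝ) ≤ D ^ 2 * (l : ℝ) ^ ε * (36864 / (k : ℝ)) := by positivity
  have hsqc : Real.sqrt π / Real.sqrt c = Real.sqrt π * (2 * l) / Real.sqrt k := by
    rw [hcdef, Real.sqrt_div (by positivity : (0:ℝ) ≤ (k:ℝ)),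
      show (4 * (l : ℝ) ^ 2) = (2 * l) ^ 2 by ring,
      Real.sqrt_sq (by positivity : (0:ℝ) ≤ 2 * (l:ℝ))]
    field_simp
  have hklhs : (k : ℝ) ^ (-(3 : ℝ) / 2) = 1 / ((k : ℝ) * Real.sqrt k) := by
    have h1 : (k : ℝ) ^ ((3 : ℝ) / 2) = (k : ℝ) * Real.sqrt k := by
      rw [show (3 : ℝ) / 2 = 1 + 1 / 2 by norm_num, Real.rpow_add hk0, Real.rpow_one,
        ← Real.sqrt_eq_rpow]
    rw [show -(3 : ℝ) / 2 = -((3 : ℝ) / 2) by norm_num, Real.rpow_neg hk0.le, h1]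
    rw [one_div]
  have hlpow : (l : ℝ) ^ (1 + ε) = (l : ℝ) * (l : ℝ) ^ ε := by
    rw [Real.rpow_add hl0, Real.rpow_one]
  have hsqk : (0 : ℝ) < Real.sqrt k := Real.sqrt_pos.2 hk0
  calc |∑ m ∈ S, F m| ≤ ∑ m ∈ S, |F m| := Finset.abs_sum_le_sum_abs _ _
    _ ≤ ∑ m ∈ S, D ^ 2 * (l : ℝ) ^ ε *
          ((36864 / (k : ℝ)) * Real.exp (-c * ((φ m : ℕ) : ℝ) ^ 2)) :=
        Finset.sum_le_sum hterm
    _ = D ^ 2 * (l : ℝ) ^ ε * (36864 / (k : ℝ)) *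
          ∑ m ∈ S, Real.exp (-c * ((φ m : ℕ) : ℝ) ^ 2) := by
        rw [Finset.mul_sum]
        apply Finset.sum_congr rfl
        intro m _
        ring
    _ ≤ D ^ 2 * (l : ℝ) ^ ε * (36864 / (k : ℝ)) * (2 * (Real.sqrt π / Real.sqrt c)) := by
        apply mul_le_mul_of_nonneg_left _ hQ0
        exact hsum
    _ = 147456 * Real.sqrt π * D ^ 2 * (l : ℝ) ^ (1 + ε) * (k : ℝ) ^ (-(3 : ℝ) / 2) := by
        rw [hsqc, hklhs, hlpow]
        field_simp
        ring
end
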